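/- arXiv:2105.01584 — 9 statements merged into one kernel-verified Lean document; each statement's English description precedes it below -/
import Mathlib

section
/- Let λ₁,…,λ₈ be 2-dimensional subspaces of V and α₉ a 3-dimensional subspace of V such that the nine subspaces λ₁,…,λ₈,α₉ pairwise intersect in the zero subspace (so their nonzero vectors partition the 31 nonzero vectors of V). Then the partial spread S₈ = {λ₁,…,λ₈} is regulus-free: for all distinct indices i, j, k in {1,…,8}, the join λᵢ ⊔ λⱼ ⊔ λₖ is 5-dimensional (equals V), i.e., no three of the lines λ₁,…,λ₈ form a regulus. -/
open Module

abbrev V2 := Fin 5 → ZMod 2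

lemma card_submodule (p : Submodule (ZMod 2) V2) :
    Nat.card p = 2 ^ finrank (ZMod 2) p := by
  have : Fintype ↥p := Fintype.ofFinite _
  rw [Nat.card_eq_fintype_card, card_eq_pow_finrank (K := ZMod 2), ZMod.card]

lemma aux_count {ι : Type*} [Fintype ι] (W : Submodule (ZMod 2) V2)
    (f : ι → Submodule (ZMod 2) V2)
    (hle : ∀ l, f l ≤ W)
    (hdisj : ∀ l m, l ≠ m → f l ⊓ f m = ⊥) :
    ∑ l : ι, (Nat.card (f l) - 1) ≤ Nat.card W - 1 := by
  classical
  set g : ι → Finset V2 := fun l => ((f l : Set V2).toFinite.toFinset).erase 0 with hg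
  have hcard : ∀ l, (g l).card = Nat.card (f l) - 1 := by
    intro l
    rw [hg]
    rw [Finset.card_erase_of_mem (by simp [Set.Finite.mem_toFinset])]
    congr 1
    rw [show Nat.card ↥(f l) = Nat.card ↑(f l : Set V2) from rfl,
      Nat.card_coe_set_eq, Set.ncard_eq_toFinset_card _ (Set.toFinite _)]
  have hdisjF : ∀ l ∈ (Finset.univ : Finset ι), ∀ m ∈ (Finset.univ : Finset ι),
      l ≠ m → Disjoint (g l) (g m) := by
    intro l _ m _ hlm
    rw [Finset.disjoint_left]
    intro x hx hx'
    simp only [hg, Finset.mem_erase, Set.Finite.mem_toFinset, SetLike.mem_coe] at hx hx'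
    have : x ∈ f l ⊓ f m := ⟨hx.2, hx'.2⟩
    rw [hdisj l m hlm] at this
    exact hx.1 (by simpa using this)
  have hsub : Finset.univ.biUnion g ⊆ ((W : Set V2).toFinite.toFinset).erase 0 := by
    intro x hx
    simp only [Finset.mem_biUnion] at hx
    obtain ⟨l, _, hx⟩ := hx
    simp only [hg, Finset.mem_erase, Set.Finite.mem_toFinset, SetLike.mem_coe] at hx ⊢
    exact ⟨hx.1, hle l hx.2⟩
  calc ∑ l : ι, (Nat.card (f l) - 1) = ∑ l : ι, (g l).card := by
        simp [hcard]
    _ = (Finset.univ.biUnion g).card := (Finset.card_biUnion hdisjF).symm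
    _ ≤ (((W : Set V2).toFinite.toFinset).erase 0).card := Finset.card_le_card hsub
    _ = Nat.card W - 1 := by
        rw [Finset.card_erase_of_mem (by simp [Set.Finite.mem_toFinset])]
        congr 1
        rw [show Nat.card ↥W = Nat.card ↑(W : Set V2) from rfl,
          Nat.card_coe_set_eq, Set.ncard_eq_toFinset_card _ (Set.toFinite _)]

/-- If eight lines λ₁,…,λ₈ (2-dim subspaces) and a plane α₉ (3-dim subspace)
of `V = Fin 5 → ZMod 2` pairwise intersect in `⊥` (so they partition the nonzero vectors
of `V`), then the partial spread `{λ₁,…,λ₈}` is regulus-free: the join of any three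
distinct lines among them is 5-dimensional, i.e. all of `V`. -/
theorem stmt_0
    (lam : Fin 8 → Submodule (ZMod 2) (Fin 5 → ZMod 2))
    (α₉ : Submodule (ZMod 2) (Fin 5 → ZMod 2))
    (hlam : ∀ i, finrank (ZMod 2) (lam i) = 2)
    (hα : finrank (ZMod 2) α₉ = 3)
    (hdisj : ∀ i j, i ≠ j → lam i ⊓ lam j = ⊥)
    (hdisjα : ∀ i, lam i ⊓ α₉ = ⊥) :
    ∀ i j k : Fin 8, i ≠ j → i ≠ k → j ≠ k →
      finrank (ZMod 2) ↥(lam i ⊔ lam j ⊔ lam k) = 5 ∧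
        lam i ⊔ lam j ⊔ lam k = ⊤ := by
  have hV : finrank (ZMod 2) (Fin 5 → ZMod 2) = 5 := by
    simp [Module.finrank_pi]
  intro i j k hij hik hjk
  set W := lam i ⊔ lam j ⊔ lam k with hWdef
  have hWle : finrank (ZMod 2) W ≤ 5 := by
    have := Submodule.finrank_le W; rw [hV] at this; exact this
  have h4 : finrank (ZMod 2) ↥(lam i ⊔ lam j) = 4 := by
    have h := Submodule.finrank_sup_add_finrank_inf_eq (lam i) (lam j)
    rw [hdisj i j hij] at h
    simp [hlam] at h
    simpa using h
  have hge4 : 4 ≤ finrank (ZMod 2) W := by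
    rw [← h4]
    exact Submodule.finrank_mono le_sup_left
  have key : finrank (ZMod 2) W = 5 := by
    by_contra hne
    have hW4 : finrank (ZMod 2) W = 4 := by omega
    set f : Option (Fin 8) → Submodule (ZMod 2) (Fin 5 → ZMod 2) :=
      fun o => (o.elim α₉ lam) ⊓ W with hf
    have hle : ∀ o, f o ≤ W := fun o => inf_le_right
    have hd : ∀ o o', o ≠ o' → f o ⊓ f o' = ⊥ := by
      intro o o' hoo'
      rw [eq_bot_iff]
      match o, o' with
      | none, none => exact absurd rfl hoo'
      | none, some b =>
        calc (α₉ ⊓ W) ⊓ (lam b ⊓ W) ≤ lam b ⊓ α₉ := by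
              refine le_inf ?_ ?_
              · exact inf_le_right.trans inf_le_left
              · exact inf_le_left.trans inf_le_left
          _ = ⊥ := hdisjα b
      | some a, none =>
        calc (lam a ⊓ W) ⊓ (α₉ ⊓ W) ≤ lam a ⊓ α₉ := by
              refine le_inf ?_ ?_
              · exact inf_le_left.trans inf_le_left
              · exact inf_le_right.trans inf_le_left
          _ = ⊥ := hdisjα a
      | some a, some b =>
        have hab : a ≠ b := by simpa using hoo'
        calc (lam a ⊓ W) ⊓ (lam b ⊓ W) ≤ lam a ⊓ lam b := by
              refine le_inf ?_ ?_
              · exact inf_le_left.trans inf_le_left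
              · exact inf_le_right.trans inf_le_left
          _ = ⊥ := hdisj a b hab
    have hsum := aux_count W f hle hd
    rw [Fintype.sum_option] at hsum
    have hcardW : Nat.card W = 16 := by
      rw [card_submodule, hW4]; norm_num
    -- lower bound for the plane term
    have hαlow : 4 ≤ Nat.card (f none) := by
      have h := Submodule.finrank_sup_add_finrank_inf_eq α₉ W
      have h5 : finrank (ZMod 2) ↥(α₉ ⊔ W) ≤ 5 := by
        have := Submodule.finrank_le (α₉ ⊔ W); rw [hV] at this; exact this
      have h2 : 2 ≤ finrank (ZMod 2) ↥(α₉ ⊓ W) := by omega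
      have : Nat.card (f none) = 2 ^ finrank (ZMod 2) ↥(α₉ ⊓ W) := card_submodule _
      calc (4:ℕ) = 2 ^ 2 := rfl
        _ ≤ 2 ^ finrank (ZMod 2) ↥(α₉ ⊓ W) := Nat.pow_le_pow_right (by norm_num) h2
        _ = Nat.card (f none) := this.symm
    -- lower bounds for the line terms
    have hlinelow : ∀ l : Fin 8, 2 ≤ Nat.card (f (some l)) := by
      intro l
      have h := Submodule.finrank_sup_add_finrank_inf_eq (lam l) W
      have h5 : finrank (ZMod 2) ↥(lam l ⊔ W) ≤ 5 := by
        have := Submodule.finrank_le (lam l ⊔ W); rw [hV] at this; exact this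
      have h1 : 1 ≤ finrank (ZMod 2) ↥(lam l ⊓ W) := by
        rw [hlam] at h; omega
      have : Nat.card (f (some l)) = 2 ^ finrank (ZMod 2) ↥(lam l ⊓ W) := card_submodule _
      calc (2:ℕ) = 2 ^ 1 := rfl
        _ ≤ 2 ^ finrank (ZMod 2) ↥(lam l ⊓ W) := Nat.pow_le_pow_right (by norm_num) h1
        _ = Nat.card (f (some l)) := this.symm
    have hmem : ∀ l : Fin 8, l ∈ ({i, j, k} : Finset (Fin 8)) → Nat.card (f (some l)) = 4 := by
      intro l hl
      have hlW : lam l ≤ W := by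
        simp only [Finset.mem_insert, Finset.mem_singleton] at hl
        rcases hl with rfl | rfl | rfl
        · exact le_sup_of_le_left le_sup_left
        · exact le_sup_of_le_left le_sup_right
        · exact le_sup_right
      have hfl : f (some l) = lam l := by
        simp only [hf]
        exact inf_eq_left.mpr hlW
      rw [hfl, card_submodule, hlam]; norm_num
    have hterm : ∀ l : Fin 8,
        (if l ∈ ({i, j, k} : Finset (Fin 8)) then 3 else 1) ≤ Nat.card (f (some l)) - 1 := by
      intro l
      by_cases hl : l ∈ ({i, j, k} : Finset (Fin 8))
      · rw [if_pos hl, hmem l hl]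
      · rw [if_neg hl]
        have := hlinelow l
        omega
    have hsum2 := Finset.sum_le_sum (fun l (_ : l ∈ Finset.univ) => hterm l)
    have hscard : ({i, j, k} : Finset (Fin 8)).card = 3 :=
      Finset.card_eq_three.mpr ⟨i, j, k, hij, hik, hjk, rfl⟩
    have hs14 : ∑ l : Fin 8, (if l ∈ ({i, j, k} : Finset (Fin 8)) then 3 else 1) = 14 := by
      rw [Finset.sum_ite, Finset.sum_const, Finset.sum_const]
      rw [Finset.filter_univ_mem]
      have hc : (Finset.univ.filter (fun l => l ∉ ({i, j, k} : Finset (Fin 8)))).card = 5 := by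
        have := Finset.card_filter_add_card_filter_not
          (s := (Finset.univ : Finset (Fin 8)))
          (p := fun l => l ∈ ({i, j, k} : Finset (Fin 8)))
        rw [Finset.filter_univ_mem, hscard] at this
        simp only [Finset.card_univ, Fintype.card_fin] at this
        omega
      rw [hscard, hc]; norm_num
    rw [hs14] at hsum2
    rw [hcardW] at hsum
    have h3 : 3 ≤ Nat.card ↥(f none) - 1 := by omega
    have hfinal : 3 + 14 ≤ 16 - 1 := le_trans (Nat.add_le_add h3 hsum2) hsum
    omega
  refine ⟨key, ?_⟩
  exact Submodule.eq_top_of_finrank_eq (by rw [key, hV])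
end

section
/- Let λ₁,…,λ₈ be 2-dimensional subspaces of V and α₉ a 3-dimensional subspace of V such that the nine subspaces λ₁,…,λ₈,α₉ pairwise intersect in the zero subspace, and let λ₉ be any 2-dimensional subspace of α₉. Then S₉ = {λ₁,…,λ₉} is a partial line spread of type X with λ₉ common to all its reguli. Precisely: (a) λ₉ ⊓ λᵢ = ⊥ for each i ∈ {1,…,8}; (b) every three-element subset of {λ₁,…,λ₉} that forms a regulus contains λ₉; (c) for each i ∈ {1,…,8} there is exactly one j ∈ {1,…,8} with j ≠ i such that {λᵢ, λⱼ, λ₉} is a regulus, so the nine lines fall into exactly four reguli, all containing λ₉. -/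
open Module

/-- Three lines (2-dim subspaces) form a regulus: they are pairwise disjoint and
their join is 4-dimensional. -/
def IsRegulus (p q r : Submodule (ZMod 2) (Fin 5 → ZMod 2)) : Prop :=
  finrank (ZMod 2) p = 2 ∧ finrank (ZMod 2) q = 2 ∧ finrank (ZMod 2) r = 2 ∧
    p ⊓ q = ⊥ ∧ p ⊓ r = ⊥ ∧ q ⊓ r = ⊥ ∧
    finrank (ZMod 2) ↥(p ⊔ q ⊔ r) = 4




noncomputable def pts (p : Submodule (ZMod 2) (Fin 5 → ZMod 2)) : Finset (Fin 5 → ZMod 2) :=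
  (Set.toFinite (p : Set (Fin 5 → ZMod 2))).toFinset \ {0}

lemma mem_pts {p : Submodule (ZMod 2) (Fin 5 → ZMod 2)} {x : (Fin 5 → ZMod 2)} : x ∈ pts p ↔ x ∈ p ∧ x ≠ 0 := by
  simp [pts]

lemma card_pts (p : Submodule (ZMod 2) (Fin 5 → ZMod 2)) :
    (pts p).card = 2 ^ finrank (ZMod 2) p - 1 := by
  classical
  have h0 : ({0} : Finset (Fin 5 → ZMod 2)) ⊆ (Set.toFinite (p : Set (Fin 5 → ZMod 2))).toFinset := by
    intro x hx; simp at hx; subst hx; simp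
  rw [pts, Finset.card_sdiff_of_subset h0, Finset.card_singleton]
  congr 1
  rw [Set.Finite.card_toFinset]
  rw [← Set.toFinset_card]
  classical
  rw [Set.toFinset_card (p : Set (Fin 5 → ZMod 2))]
  have : Fintype.card (p : Set (Fin 5 → ZMod 2)) = Fintype.card p := rfl
  rw [this]
  rw [card_eq_pow_finrank (K := ZMod 2), ZMod.card]

lemma pts_disjoint {p q : Submodule (ZMod 2) (Fin 5 → ZMod 2)} (h : p ⊓ q = ⊥) :
    Disjoint (pts p) (pts q) := by
  rw [Finset.disjoint_left]
  intro x hx hx'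
  rw [mem_pts] at hx hx'
  have : x ∈ p ⊓ q := ⟨hx.1, hx'.1⟩
  rw [h, Submodule.mem_bot] at this
  exact hx.2 this

lemma card_biUnion_pts {ι : Type*} [DecidableEq ι] (s : Finset ι)
    (f : ι → Submodule (ZMod 2) (Fin 5 → ZMod 2))
    (hd : ∀ i ∈ s, ∀ j ∈ s, i ≠ j → f i ⊓ f j = ⊥) :
    (s.biUnion fun i => pts (f i)).card = ∑ i ∈ s, (2 ^ finrank (ZMod 2) (f i) - 1) := by
  rw [Finset.card_biUnion]
  · exact Finset.sum_congr rfl fun i _ => card_pts (f i)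
  · exact fun i hi j hj hij => pts_disjoint (hd i hi j hj hij)

lemma sum_pts_eq {ι : Type*} [DecidableEq ι] (s : Finset ι)
    (f : ι → Submodule (ZMod 2) (Fin 5 → ZMod 2)) (W : Submodule (ZMod 2) (Fin 5 → ZMod 2))
    (hd : ∀ i ∈ s, ∀ j ∈ s, i ≠ j → f i ⊓ f j = ⊥)
    (hle : ∀ i ∈ s, f i ≤ W)
    (hcov : ∀ x ∈ W, x ≠ 0 → ∃ i ∈ s, x ∈ f i) :
    ∑ i ∈ s, (2 ^ finrank (ZMod 2) (f i) - 1) = 2 ^ finrank (ZMod 2) W - 1 := by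
  rw [← card_biUnion_pts s f hd, ← card_pts W]
  congr 1
  apply Finset.Subset.antisymm
  · intro x hx
    rw [Finset.mem_biUnion] at hx
    obtain ⟨i, hi, hx⟩ := hx
    rw [mem_pts] at hx ⊢
    exact ⟨hle i hi hx.1, hx.2⟩
  · intro x hx
    rw [mem_pts] at hx
    obtain ⟨i, hi, hxi⟩ := hcov x hx.1 hx.2
    rw [Finset.mem_biUnion]
    exact ⟨i, hi, mem_pts.2 ⟨hxi, hx.2⟩⟩

lemma finrank_VV : finrank (ZMod 2) (Fin 5 → ZMod 2) = 5 := by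
  exact Module.finrank_fin_fun (ZMod 2)

lemma finrank_inf_ge (p q : Submodule (ZMod 2) (Fin 5 → ZMod 2)) :
    finrank (ZMod 2) p + finrank (ZMod 2) q ≤ 5 + finrank (ZMod 2) ↥(p ⊓ q) := by
  have h1 := Submodule.finrank_sup_add_finrank_inf_eq p q
  have h2 : finrank (ZMod 2) ↥(p ⊔ q) ≤ finrank (ZMod 2) (Fin 5 → ZMod 2) := Submodule.finrank_le _
  rw [finrank_VV] at h2
  omega

lemma finrank_sup_of_disj {p q : Submodule (ZMod 2) (Fin 5 → ZMod 2)} (h : p ⊓ q = ⊥) :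
    finrank (ZMod 2) ↥(p ⊔ q) = finrank (ZMod 2) p + finrank (ZMod 2) q := by
  have h1 := Submodule.finrank_sup_add_finrank_inf_eq p q
  rw [h] at h1
  simp at h1
  omega

lemma opt_sum (g : Option (Fin 8) → ℕ) :
    ∑ o : Option (Fin 8), g o = g none + ∑ m : Fin 8, g (some m) := by
  rw [univ_option, Finset.sum_insertNone]

/-- Nine pairwise-disjoint pieces (eight lines and a plane) cover all nonzero vectors. -/
lemma cover_lemma (f : Option (Fin 8) → Submodule (ZMod 2) (Fin 5 → ZMod 2))
    (hfd : ∀ o o', o ≠ o' → f o ⊓ f o' = ⊥)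
    (hr3 : finrank (ZMod 2) (f none) = 3)
    (hr2 : ∀ m, finrank (ZMod 2) (f (some m)) = 2) :
    ∀ x : (Fin 5 → ZMod 2), x ≠ 0 → ∃ o, x ∈ f o := by
  classical
  have hsum : ∑ o : Option (Fin 8), (2 ^ finrank (ZMod 2) (f o) - 1) = 31 := by
    rw [opt_sum, hr3]
    rw [Finset.sum_congr rfl (fun m _ => by rw [hr2 m])]
    simp
  have hcard : (Finset.univ.biUnion fun o => pts (f o)).card = 31 := by
    rw [card_biUnion_pts _ f (fun o _ o' _ h => hfd o o' h)]
    exact hsum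
  have htop : (pts (⊤ : Submodule (ZMod 2) (Fin 5 → ZMod 2))).card = 31 := by
    rw [card_pts, finrank_top, finrank_VV]; rfl
  have hsub : (Finset.univ.biUnion fun o => pts (f o)) ⊆ pts (⊤ : Submodule (ZMod 2) (Fin 5 → ZMod 2)) := by
    intro x hx
    rw [Finset.mem_biUnion] at hx
    obtain ⟨o, _, hx⟩ := hx
    rw [mem_pts] at hx ⊢
    exact ⟨Submodule.mem_top, hx.2⟩
  have heq := Finset.eq_of_subset_of_card_le hsub (by rw [hcard, htop])
  intro x hx
  have hxmem : x ∈ pts (⊤ : Submodule (ZMod 2) (Fin 5 → ZMod 2)) := mem_pts.2 ⟨Submodule.mem_top, hx⟩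
  rw [← heq, Finset.mem_biUnion] at hxmem
  obtain ⟨o, _, ho⟩ := hxmem
  exact ⟨o, (mem_pts.1 ho).1⟩

/-- Key counting identity inside any subspace `W`. -/
lemma inter_count (f : Option (Fin 8) → Submodule (ZMod 2) (Fin 5 → ZMod 2))
    (hfd : ∀ o o', o ≠ o' → f o ⊓ f o' = ⊥)
    (hcov : ∀ x : (Fin 5 → ZMod 2), x ≠ 0 → ∃ o, x ∈ f o)
    (W : Submodule (ZMod 2) (Fin 5 → ZMod 2)) :
    ∑ o : Option (Fin 8), (2 ^ finrank (ZMod 2) ↥(f o ⊓ W) - 1)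
      = 2 ^ finrank (ZMod 2) W - 1 := by
  classical
  apply sum_pts_eq
  · intro o _ o' _ h
    refine le_bot_iff.mp ?_
    rw [← hfd o o' h]
    exact le_inf (inf_le_left.trans inf_le_left) (inf_le_right.trans inf_le_left)
  · intro o _
    exact inf_le_right
  · intro x hxW hx0
    obtain ⟨o, ho⟩ := hcov x hx0
    exact ⟨o, Finset.mem_univ o, ⟨ho, hxW⟩⟩

/-- Split form of `inter_count`. -/
lemma inter_count' (lam : Fin 8 → Submodule (ZMod 2) (Fin 5 → ZMod 2)) (α₉ : Submodule (ZMod 2) (Fin 5 → ZMod 2))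
    (hlam : ∀ i, finrank (ZMod 2) (lam i) = 2)
    (hα : finrank (ZMod 2) α₉ = 3)
    (hdisj : ∀ i j, i ≠ j → lam i ⊓ lam j = ⊥)
    (hdisjα : ∀ i, lam i ⊓ α₉ = ⊥)
    (W : Submodule (ZMod 2) (Fin 5 → ZMod 2)) :
    (2 ^ finrank (ZMod 2) ↥(α₉ ⊓ W) - 1)
      + ∑ m : Fin 8, (2 ^ finrank (ZMod 2) ↥(lam m ⊓ W) - 1)
      = 2 ^ finrank (ZMod 2) W - 1 := by
  classical
  have hfd : ∀ o o' : Option (Fin 8), o ≠ o' →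
      (Option.elim o α₉ lam) ⊓ (Option.elim o' α₉ lam) = ⊥ := by
    rintro (_ | i) (_ | j) h
    · exact absurd rfl h
    · show α₉ ⊓ lam j = ⊥
      rw [inf_comm]; exact hdisjα j
    · exact hdisjα i
    · exact hdisj i j (by simpa using h)
  have hcov := cover_lemma (fun o => Option.elim o α₉ lam) (by exact hfd) hα hlam
  have h := inter_count (fun o => Option.elim o α₉ lam) (by exact hfd) hcov W
  rw [opt_sum] at h
  exact h


/-- Given eight lines λ₁,…,λ₈ and a plane α₉ pairwise intersecting in `⊥`,
and any line λ₉ contained in α₉, the nine lines form a maximal partial spread of type X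
with λ₉ common to all its reguli: (a) λ₉ is disjoint from each λᵢ; (b) no three of
λ₁,…,λ₈ form a regulus (every regulus of the spread contains λ₉); (c) for each i there
is exactly one j ≠ i such that {λᵢ, λⱼ, λ₉} is a regulus, so the lines fall into exactly
four reguli, all containing λ₉. -/
theorem stmt_1
    (lam : Fin 8 → Submodule (ZMod 2) (Fin 5 → ZMod 2))
    (α₉ lam₉ : Submodule (ZMod 2) (Fin 5 → ZMod 2))
    (hlam : ∀ i, finrank (ZMod 2) (lam i) = 2)
    (hα : finrank (ZMod 2) α₉ = 3)
    (hdisj : ∀ i j, i ≠ j → lam i ⊓ lam j = ⊥)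
    (hdisjα : ∀ i, lam i ⊓ α₉ = ⊥)
    (hlam₉ : finrank (ZMod 2) lam₉ = 2)
    (hle : lam₉ ≤ α₉) :
    (∀ i, lam₉ ⊓ lam i = ⊥) ∧
    (∀ i j k : Fin 8, i ≠ j → i ≠ k → j ≠ k →
      ¬ IsRegulus (lam i) (lam j) (lam k)) ∧
    (∀ i : Fin 8, ∃! j : Fin 8, j ≠ i ∧ IsRegulus (lam i) (lam j) lam₉) := by
  classical
  have parta : ∀ i, lam₉ ⊓ lam i = ⊥ := by
    intro i
    refine le_bot_iff.mp ?_
    rw [← hdisjα i]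
    exact le_inf inf_le_right (inf_le_left.trans hle)
  have key : ∀ i j : Fin 8, j ≠ i →
      (IsRegulus (lam i) (lam j) lam₉ ↔ lam j ≤ lam i ⊔ lam₉) := by
    intro i j hji
    have hIW : lam i ⊓ lam₉ = ⊥ := by rw [inf_comm]; exact parta i
    have hW4 : finrank (ZMod 2) ↥(lam i ⊔ lam₉) = 4 := by
      rw [finrank_sup_of_disj hIW, hlam i, hlam₉]
    constructor
    · intro hreg
      unfold IsRegulus at hreg
      obtain ⟨-, -, -, -, -, -, h7⟩ := hreg
      have hle2 : lam i ⊔ lam₉ ≤ lam i ⊔ lam j ⊔ lam₉ :=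
        sup_le (le_sup_left.trans le_sup_left) le_sup_right
      have heq := Submodule.eq_of_le_of_finrank_le hle2 (le_of_eq (h7.trans hW4.symm))
      exact le_trans (le_trans le_sup_right le_sup_left) heq.ge
    · intro hjW
      have hsupeq : lam i ⊔ lam j ⊔ lam₉ = lam i ⊔ lam₉ := by
        apply le_antisymm
        · exact sup_le (sup_le le_sup_left hjW) le_sup_right
        · exact sup_le (le_sup_left.trans le_sup_left) le_sup_right
      exact ⟨hlam i, hlam j, hlam₉, hdisj i j (Ne.symm hji), hIW,
        (by rw [inf_comm]; exact parta j), by rw [hsupeq, hW4]⟩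
  refine ⟨parta, ?_, ?_⟩
  · -- part (b)
    intro i j k hij hik hjk hreg
    unfold IsRegulus at hreg
    obtain ⟨-, -, -, -, -, -, h7⟩ := hreg
    set W := lam i ⊔ lam j ⊔ lam k with hWdef
    have hcnt := inter_count' lam α₉ hlam hα hdisj hdisjα W
    rw [h7] at hcnt
    norm_num at hcnt
    have hA : 2 ≤ finrank (ZMod 2) ↥(α₉ ⊓ W) := by
      have := finrank_inf_ge α₉ W
      rw [hα, h7] at this
      omega
    have hterm : ∀ m : Fin 8, 1 ≤ finrank (ZMod 2) ↥(lam m ⊓ W) := by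
      intro m
      have := finrank_inf_ge (lam m) W
      rw [hlam m, h7] at this
      omega
    have hsum_ge : 14 ≤ ∑ m : Fin 8, (2 ^ finrank (ZMod 2) ↥(lam m ⊓ W) - 1) := by
      have h1 : ∀ m : Fin 8, (2 ^ finrank (ZMod 2) ↥(lam m ⊓ W) - 1)
          = (2 ^ finrank (ZMod 2) ↥(lam m ⊓ W) - 2) + 1 := by
        intro m
        have h2 : 2 ≤ 2 ^ finrank (ZMod 2) ↥(lam m ⊓ W) := by
          calc (2:ℕ) = 2 ^ 1 := rfl
          _ ≤ _ := Nat.pow_le_pow_right (by norm_num) (hterm m)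
        omega
      rw [Finset.sum_congr rfl (fun m _ => h1 m), Finset.sum_add_distrib]
      have h3 : ∑ m ∈ ({i, j, k} : Finset (Fin 8)), (2 ^ finrank (ZMod 2) ↥(lam m ⊓ W) - 2)
          ≤ ∑ m : Fin 8, (2 ^ finrank (ZMod 2) ↥(lam m ⊓ W) - 2) :=
        Finset.sum_le_sum_of_subset (Finset.subset_univ _)
      have hiW : lam i ⊓ W = lam i := inf_eq_left.mpr (le_sup_left.trans le_sup_left)
      have hjW : lam j ⊓ W = lam j := inf_eq_left.mpr (le_sup_right.trans le_sup_left)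
      have hkW : lam k ⊓ W = lam k := inf_eq_left.mpr le_sup_right
      have h4 : ∑ m ∈ ({i, j, k} : Finset (Fin 8)), (2 ^ finrank (ZMod 2) ↥(lam m ⊓ W) - 2) = 6 := by
        rw [Finset.sum_insert (by simp [hij, hik]), Finset.sum_insert (by simp [hjk]),
          Finset.sum_singleton, hiW, hjW, hkW, hlam i, hlam j, hlam k]
        norm_num
      have h5 : ∑ _m : Fin 8, (1:ℕ) = 8 := by simp
      omega
    have hA3 : 3 ≤ 2 ^ finrank (ZMod 2) ↥(α₉ ⊓ W) - 1 := by
      have h6 : 4 ≤ 2 ^ finrank (ZMod 2) ↥(α₉ ⊓ W) := by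
        calc (4:ℕ) = 2 ^ 2 := rfl
        _ ≤ _ := Nat.pow_le_pow_right (by norm_num) hA
      omega
    omega
  · -- part (c)
    intro i
    have hIW : lam i ⊓ lam₉ = ⊥ := by rw [inf_comm]; exact parta i
    set W := lam i ⊔ lam₉ with hWdef
    have hW4 : finrank (ZMod 2) ↥W = 4 := by
      rw [hWdef, finrank_sup_of_disj hIW, hlam i, hlam₉]
    have hαW : α₉ ⊓ W = lam₉ := by
      have h1 : lam₉ ≤ α₉ ⊓ W := le_inf hle le_sup_right
      have h2 : finrank (ZMod 2) ↥(α₉ ⊓ W) ≤ 2 := by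
        by_contra hcon
        push_neg at hcon
        have hle3 : finrank (ZMod 2) ↥(α₉ ⊓ W) ≤ 3 := by
          have := Submodule.finrank_mono (inf_le_left : α₉ ⊓ W ≤ α₉)
          rw [hα] at this
          exact this
        have heq : α₉ ⊓ W = α₉ :=
          Submodule.eq_of_le_of_finrank_le inf_le_left (by rw [hα]; omega)
        have hαle : α₉ ≤ W := by rw [← heq]; exact inf_le_right
        have h5 : finrank (ZMod 2) ↥(lam i ⊔ α₉) ≤ finrank (ZMod 2) ↥W :=
          Submodule.finrank_mono (sup_le le_sup_left hαle)
        rw [finrank_sup_of_disj (hdisjα i), hlam i, hα, hW4] at h5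
        omega
      exact (Submodule.eq_of_le_of_finrank_le h1 (by rw [hlam₉]; exact h2)).symm
    have hcnt := inter_count' lam α₉ hlam hα hdisj hdisjα W
    rw [hαW, hlam₉, hW4] at hcnt
    have hsum12 : ∑ m : Fin 8, (2 ^ finrank (ZMod 2) ↥(lam m ⊓ W) - 1) = 12 := by
      norm_num at hcnt
      omega
    have hiW2 : lam i ⊓ W = lam i := inf_eq_left.mpr le_sup_left
    have herase : ∑ m ∈ Finset.univ.erase i, (2 ^ finrank (ZMod 2) ↥(lam m ⊓ W) - 1) = 9 := by
      rw [← Finset.add_sum_erase _ _ (Finset.mem_univ i), hiW2, hlam i] at hsum12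
      have e : (2:ℕ) ^ 2 - 1 = 3 := rfl
      rw [e] at hsum12
      omega
    have hdm : ∀ m : Fin 8, finrank (ZMod 2) ↥(lam m ⊓ W) ≤ 2 ∧
        1 ≤ finrank (ZMod 2) ↥(lam m ⊓ W) := by
      intro m
      constructor
      · have := Submodule.finrank_mono (inf_le_left : lam m ⊓ W ≤ lam m)
        rw [hlam m] at this
        exact this
      · have := finrank_inf_ge (lam m) W
        rw [hlam m, hW4] at this
        omega
    have hiff : ∀ m : Fin 8, (lam m ≤ W ↔ finrank (ZMod 2) ↥(lam m ⊓ W) = 2) := by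
      intro m
      constructor
      · intro h
        rw [inf_eq_left.mpr h, hlam m]
      · intro h
        have heq : lam m ⊓ W = lam m :=
          Submodule.eq_of_le_of_finrank_le inf_le_left (le_of_eq (by rw [hlam m, h]))
        exact inf_eq_left.mp heq
    set T := (Finset.univ.erase i).filter (fun m => lam m ≤ W) with hT
    have hsplit := Finset.sum_filter_add_sum_filter_not (Finset.univ.erase i)
      (fun m => lam m ≤ W) (fun m => 2 ^ finrank (ZMod 2) ↥(lam m ⊓ W) - 1)
    have hTsum : ∑ m ∈ T, (2 ^ finrank (ZMod 2) ↥(lam m ⊓ W) - 1) = 3 * T.card := by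
      have h3 : ∀ m ∈ T, 2 ^ finrank (ZMod 2) ↥(lam m ⊓ W) - 1 = 3 := by
        intro m hm
        rw [hT, Finset.mem_filter] at hm
        rw [(hiff m).mp hm.2]
        norm_num
      rw [Finset.sum_congr rfl h3, Finset.sum_const, smul_eq_mul, mul_comm]
    have hTcsum : ∑ m ∈ (Finset.univ.erase i).filter (fun m => ¬ lam m ≤ W),
        (2 ^ finrank (ZMod 2) ↥(lam m ⊓ W) - 1)
        = ((Finset.univ.erase i).filter (fun m => ¬ lam m ≤ W)).card := by
      have h1 : ∀ m ∈ (Finset.univ.erase i).filter (fun m => ¬ lam m ≤ W),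
          2 ^ finrank (ZMod 2) ↥(lam m ⊓ W) - 1 = 1 := by
        intro m hm
        rw [Finset.mem_filter] at hm
        have hne : finrank (ZMod 2) ↥(lam m ⊓ W) ≠ 2 := fun h => hm.2 ((hiff m).mpr h)
        have hb := hdm m
        have h1' : finrank (ZMod 2) ↥(lam m ⊓ W) = 1 := by omega
        rw [h1']
        norm_num
      rw [Finset.sum_congr rfl h1, Finset.sum_const, smul_eq_mul, mul_one]
    have hcard7 : (Finset.univ.erase i).card = 7 := by
      rw [Finset.card_erase_of_mem (Finset.mem_univ i)]
      simp
    have hcards := Finset.card_filter_add_card_filter_not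
      (s := Finset.univ.erase i) (p := fun m => lam m ≤ W)
    have hT1 : T.card = 1 := by
      rw [hT] at hTsum ⊢
      omega
    obtain ⟨j, hj⟩ := Finset.card_eq_one.mp hT1
    have hjT : j ∈ T := by rw [hj]; exact Finset.mem_singleton_self j
    rw [hT, Finset.mem_filter, Finset.mem_erase] at hjT
    refine ⟨j, ⟨hjT.1.1, (key i j hjT.1.1).mpr hjT.2⟩, ?_⟩
    rintro j' ⟨hj'ne, hreg'⟩
    have hj'W : lam j' ≤ W := (key i j' hj'ne).mp hreg'
    have hmem : j' ∈ T := by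
      rw [hT, Finset.mem_filter, Finset.mem_erase]
      exact ⟨⟨hj'ne, Finset.mem_univ j'⟩, hj'W⟩
    rw [hj, Finset.mem_singleton] at hmem
    exact hmem
end

section
/- Let {a₁,…,a₉} be a maximal partial line spread of type X with common line a₉ and special plane α₉, and let B be a codeword plane for the spread. If B ⊓ a₉ = ⊥, then exactly one of the four holes of the spread lies in B. -/
open Module

/-- The holes of a partial line spread: the nonzero vectors covered by none of its lines. -/
def holes (a : Fin 9 → Submodule (ZMod 2) (Fin 5 → ZMod 2)) : Set (Fin 5 → ZMod 2) :=
  {v | v ≠ 0 ∧ ∀ i, v ∉ a i}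

/-!
The plane `B` and the special plane `α₉` are two planes of `PG(4,2)`, so they meet in at least a
point; since `B` misses the line `a₉` and `α₉` is spanned by `a₉` and any point off it, they meet
in exactly one point. The nonzero vectors of `α₉` off `a₉` are precisely the holes, so the holes
lying in `B` are exactly this point.
-/

namespace Submodule

variable {K V : Type*} [DivisionRing K] [AddCommGroup V] [Module K V]

theorem finrank_add_finrank_le_finrank_add_finrank_inf [FiniteDimensional K V]
    (s t : Submodule K V) : finrank K s + finrank K t ≤ finrank K V + finrank K ↥(s ⊓ t) := by
  rw [← finrank_sup_add_finrank_inf_eq]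
  exact Nat.add_le_add_right (finrank_le _) _

theorem finrank_add_finrank_le_of_inf_eq_bot_of_sup_le [FiniteDimensional K V]
    {s t u : Submodule K V} (hst : s ⊓ t = ⊥) (hu : s ⊔ t ≤ u) :
    finrank K s + finrank K t ≤ finrank K u := by
  rw [← finrank_sup_add_finrank_inf_eq, hst, finrank_bot, add_zero]
  exact finrank_mono hu

theorem ncard_diff_zero_of_finrank_eq_one {W : Submodule K V} (hW : finrank K W = 1) :
    ((W : Set V) \ {0}).ncard = Nat.card K - 1 := by
  have : Module.Finite K W := Module.finite_of_finrank_eq_succ hW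
  rw [Set.ncard_sdiff_singleton_of_mem W.zero_mem, ← Nat.card_coe_set_eq]
  change Nat.card W - 1 = _
  rw [natCard_eq_pow_finrank (K := K), hW, pow_one]

end Submodule

theorem stmt_2_general
    (a : Fin 9 → Submodule (ZMod 2) (Fin 5 → ZMod 2))
    (α₉ B : Submodule (ZMod 2) (Fin 5 → ZMod 2))
    (haLines : ∀ i, finrank (ZMod 2) (a i) = 2)
    (hα : finrank (ZMod 2) α₉ = 3)
    (ha8α : a 8 ≤ α₉)
    (hspec : ∀ v : Fin 5 → ZMod 2, v ≠ 0 → (v ∈ α₉ ↔ v ∈ a 8 ∨ v ∈ holes a))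
    (hB : finrank (ZMod 2) B = 3)
    (hB9 : B ⊓ a 8 = ⊥) :
    (holes a ∩ ↑B).ncard = 1 := by
  have hpoint_le : finrank (ZMod 2) ↥(B ⊓ α₉) ≤ 1 := by
    have := Submodule.finrank_add_finrank_le_of_inf_eq_bot_of_sup_le
      (eq_bot_mono (inf_le_inf_right _ inf_le_left) hB9) (sup_le inf_le_right ha8α)
    rw [haLines, hα] at this
    omega
  have hpoint_ge : 1 ≤ finrank (ZMod 2) ↥(B ⊓ α₉) := by
    have := Submodule.finrank_add_finrank_le_finrank_add_finrank_inf B α₉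
    rw [hB, hα, finrank_fin_fun] at this
    omega
  have hholes : holes a ∩ ↑B = ↑(B ⊓ α₉) \ {0} := by
    ext v
    by_cases hv : v = 0
    · simp [hv, holes]
    have hv8 : v ∈ B → v ∉ a 8 := fun hvB hva ↦
      hv ((Submodule.mem_bot _).1 (hB9 ▸ Submodule.mem_inf.2 ⟨hvB, hva⟩))
    simp only [Set.mem_inter_iff, Set.mem_sdiff, SetLike.mem_coe, Submodule.mem_inf,
      Set.mem_singleton_iff, hspec v hv]
    tauto
  rw [hholes, Submodule.ncard_diff_zero_of_finrank_eq_one (le_antisymm hpoint_le hpoint_ge),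
    Nat.card_zmod]

/-- For a maximal partial line spread {a₁,…,a₉} of type X with common
line a₉ (= `a 8`) and special plane α₉, and a codeword plane B: if B is disjoint from
the common line a₉, then exactly one of the four holes of the spread lies in B. -/
theorem stmt_2
    (a : Fin 9 → Submodule (ZMod 2) (Fin 5 → ZMod 2))
    (α₉ B : Submodule (ZMod 2) (Fin 5 → ZMod 2))
    (haLines : ∀ i, finrank (ZMod 2) (a i) = 2)
    (hadisj : ∀ i j, i ≠ j → a i ⊓ a j = ⊥)
    (hr1 : finrank (ZMod 2) ↥(a 0 ⊔ a 1 ⊔ a 8) = 4)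
    (hr2 : finrank (ZMod 2) ↥(a 2 ⊔ a 3 ⊔ a 8) = 4)
    (hr3 : finrank (ZMod 2) ↥(a 4 ⊔ a 5 ⊔ a 8) = 4)
    (hr4 : finrank (ZMod 2) ↥(a 6 ⊔ a 7 ⊔ a 8) = 4)
    (hα : finrank (ZMod 2) α₉ = 3)
    (ha8α : a 8 ≤ α₉)
    (hspec : ∀ v : Fin 5 → ZMod 2, v ≠ 0 → (v ∈ α₉ ↔ v ∈ a 8 ∨ v ∈ holes a))
    (hB : finrank (ZMod 2) B = 3)
    (hBcode : ∀ i, finrank (ZMod 2) ↥(B ⊓ a i) ≤ 1)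
    (hB9 : B ⊓ a 8 = ⊥) :
    (holes a ∩ ↑B).ncard = 1 :=
  stmt_2_general a α₉ B haLines hα ha8α hspec hB hB9
end

section
/- Let {a₁,…,a₉} be a maximal partial line spread of type X with common line a₉ and special plane α₉, and let B be a codeword plane for the spread. If B ⊓ a₉ ≠ ⊥, then the number of holes of the spread lying in B is either 0 or 2; moreover, if two distinct holes h₁, h₂ lie in B, then h₁ + h₂ is the unique nonzero vector of B ⊓ a₉. -/
open Module

lemma two_smul_cases (c : ZMod 2) : c = 0 ∨ c = 1 := by revert c; decide

lemma addself (v : Fin 5 → ZMod 2) : v + v = 0 := by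
  funext i
  have : ∀ x : ZMod 2, x + x = 0 := by decide
  exact this (v i)

lemma li3 {x y z : Fin 5 → ZMod 2} (hx : x ≠ 0) (hy : y ≠ 0) (hz : z ≠ 0)
    (hxy : x ≠ y) (hxz : x ≠ z) (hyz : y ≠ z) (hs : z ≠ x + y) :
    LinearIndependent (ZMod 2) ![x, y, z] := by
  rw [Fintype.linearIndependent_iff]
  intro g hg
  have hadd : ∀ u v : Fin 5 → ZMod 2, u + v = 0 → u = v := by
    intro u v h
    have : u + (v + v) = 0 + v := by rw [← add_assoc, h, zero_add]
    simpa [addself v] using this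
  rw [Fin.sum_univ_three] at hg
  simp only [Matrix.cons_val_zero, Matrix.cons_val_one, Matrix.head_cons,
    Matrix.cons_val_two, Matrix.tail_cons] at hg
  rcases two_smul_cases (g 0) with h0 | h0 <;> rcases two_smul_cases (g 1) with h1 | h1 <;>
    rcases two_smul_cases (g 2) with h2 | h2 <;> rw [h0, h1, h2] at hg <;>
    simp only [one_smul, zero_smul, add_zero, zero_add] at hg
  · intro i; fin_cases i <;> simp [h0, h1, h2]
  · exact absurd hg hz
  · exact absurd hg hy
  · exact absurd (hadd y z hg) hyz
  · exact absurd hg hx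
  · exact absurd (hadd x z hg) hxz
  · exact absurd (hadd x y hg) hxy
  · exact absurd (hadd (x + y) z hg).symm hs

lemma rank3 {W : Submodule (ZMod 2) (Fin 5 → ZMod 2)} {x y z : Fin 5 → ZMod 2}
    (hxW : x ∈ W) (hyW : y ∈ W) (hzW : z ∈ W)
    (li : LinearIndependent (ZMod 2) ![x, y, z]) :
    3 ≤ finrank (ZMod 2) W := by
  have hsp : Submodule.span (ZMod 2) (Set.range ![x, y, z]) ≤ W := by
    rw [Submodule.span_le]
    rintro v ⟨i, rfl⟩
    fin_cases i <;> simpa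
  have := finrank_span_eq_card li
  simp only [Fintype.card_fin] at this
  calc (3 : ℕ) = finrank (ZMod 2) ↥(Submodule.span (ZMod 2) (Set.range ![x, y, z])) := this.symm
    _ ≤ finrank (ZMod 2) W := Submodule.finrank_mono hsp

/-- For a maximal partial line spread {a₁,…,a₉} of type X with common
line a₉ (= `a 8`) and special plane α₉, and a codeword plane B: if B meets the common
line a₉, then B contains either 0 or 2 holes of the spread; moreover, if two distinct
holes h₁, h₂ lie in B, then h₁ + h₂ is the unique nonzero vector of B ⊓ a₉. -/
theorem stmt_3
    (a : Fin 9 → Submodule (ZMod 2) (Fin 5 → ZMod 2))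
    (α₉ B : Submodule (ZMod 2) (Fin 5 → ZMod 2))
    (haLines : ∀ i, finrank (ZMod 2) (a i) = 2)
    (hadisj : ∀ i j, i ≠ j → a i ⊓ a j = ⊥)
    (hr1 : finrank (ZMod 2) ↥(a 0 ⊔ a 1 ⊔ a 8) = 4)
    (hr2 : finrank (ZMod 2) ↥(a 2 ⊔ a 3 ⊔ a 8) = 4)
    (hr3 : finrank (ZMod 2) ↥(a 4 ⊔ a 5 ⊔ a 8) = 4)
    (hr4 : finrank (ZMod 2) ↥(a 6 ⊔ a 7 ⊔ a 8) = 4)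
    (hα : finrank (ZMod 2) α₉ = 3)
    (ha8α : a 8 ≤ α₉)
    (hspec : ∀ v : Fin 5 → ZMod 2, v ≠ 0 → (v ∈ α₉ ↔ v ∈ a 8 ∨ v ∈ holes a))
    (hB : finrank (ZMod 2) B = 3)
    (hBcode : ∀ i, finrank (ZMod 2) ↥(B ⊓ a i) ≤ 1)
    (hB9 : B ⊓ a 8 ≠ ⊥) :
    ((holes a ∩ ↑B).ncard = 0 ∨ (holes a ∩ ↑B).ncard = 2) ∧
    (∀ h₁ h₂ : Fin 5 → ZMod 2, h₁ ∈ holes a ∩ ↑B → h₂ ∈ holes a ∩ ↑B → h₁ ≠ h₂ →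
      ∀ v : Fin 5 → ZMod 2, (v ∈ B ⊓ a 8 ∧ v ≠ 0) ↔ v = h₁ + h₂) := by
  obtain ⟨w, hwmem, hw0⟩ := (Submodule.ne_bot_iff _).mp hB9
  have hwB : w ∈ B := hwmem.1
  have hwa8 : w ∈ a 8 := hwmem.2
  -- uniqueness of the nonzero vector of B ⊓ a 8
  have heq : Submodule.span (ZMod 2) {w} = B ⊓ a 8 := by
    apply Submodule.eq_of_le_of_finrank_le
    · rwa [Submodule.span_singleton_le_iff_mem]
    · rw [finrank_span_singleton hw0]; exact hBcode 8
  have huniq : ∀ v, v ∈ B ⊓ a 8 → v ≠ 0 → v = w := by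
    intro v hv hv0
    rw [← heq, Submodule.mem_span_singleton] at hv
    obtain ⟨c, rfl⟩ := hv
    rcases two_smul_cases c with hc | hc
    · exact absurd (by rw [hc, zero_smul]) hv0
    · rw [hc, one_smul]
  -- finrank (α₉ ⊓ B) ≤ 2
  have hW2 : finrank (ZMod 2) ↥(α₉ ⊓ B) ≤ 2 := by
    by_contra hlt
    push_neg at hlt
    have hWB : α₉ ⊓ B = B :=
      Submodule.eq_of_le_of_finrank_le inf_le_right (by rw [hB]; omega)
    have hBα : B ≤ α₉ := hWB ▸ inf_le_left
    have hsum := Submodule.finrank_sup_add_finrank_inf_eq (a 8) B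
    have hle : finrank (ZMod 2) ↥(a 8 ⊔ B) ≤ 3 := by
      calc finrank (ZMod 2) ↥(a 8 ⊔ B) ≤ finrank (ZMod 2) α₉ :=
            Submodule.finrank_mono (sup_le ha8α hBα)
        _ = 3 := hα
    rw [haLines 8, hB, inf_comm (a 8) B] at hsum
    have h8 := hBcode 8
    omega
  -- a hole in B gives another hole h + w in B
  have holeα : ∀ h, h ∈ holes a → h ∈ α₉ := by
    intro h hh
    exact (hspec h hh.1).mpr (Or.inr hh)
  have hplusw : ∀ h, h ∈ holes a ∩ ↑B → h + w ∈ holes a ∩ ↑B := by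
    intro h hh
    have hhole : h ∈ holes a := hh.1
    have hne0 : h + w ≠ 0 := by
      intro h0
      have : h = w := by
        have := congrArg (· + w) h0
        simpa [add_assoc, addself w] using this
      exact hhole.2 8 (this ▸ hwa8)
    have hmemα : h + w ∈ α₉ := α₉.add_mem (holeα h hhole) (ha8α hwa8)
    have : h + w ∈ a 8 ∨ h + w ∈ holes a := (hspec _ hne0).mp hmemα
    rcases this with h8 | hho
    · exfalso
      have : h ∈ a 8 := by
        have := (a 8).add_mem h8 hwa8
        simpa [add_assoc, addself w] using this
      exact hhole.2 8 this
    · exact ⟨hho, B.add_mem hh.2 hwB⟩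
  -- key: two distinct holes in B sum to w
  have key : ∀ h₁ h₂, h₁ ∈ holes a ∩ ↑B → h₂ ∈ holes a ∩ ↑B → h₁ ≠ h₂ → h₂ = h₁ + w := by
    intro h₁ h₂ hh₁ hh₂ hne
    by_contra hcon
    have hW1 : h₁ ∈ α₉ ⊓ B := ⟨holeα h₁ hh₁.1, hh₁.2⟩
    have hW2' : h₂ ∈ α₉ ⊓ B := ⟨holeα h₂ hh₂.1, hh₂.2⟩
    have hWw : w ∈ α₉ ⊓ B := ⟨ha8α hwa8, hwB⟩
    have li : LinearIndependent (ZMod 2) ![w, h₁, h₂] := by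
      apply li3 hw0 hh₁.1.1 hh₂.1.1
      · intro h; exact hh₁.1.2 8 (h ▸ hwa8)
      · intro h; exact hh₂.1.2 8 (h ▸ hwa8)
      · exact hne
      · intro h; exact hcon (by rw [h, add_comm])
    have := rank3 hWw hW1 hW2' li
    omega
  constructor
  · rcases (holes a ∩ ↑B).eq_empty_or_nonempty with hS | ⟨h, hh⟩
    · left; rw [hS, Set.ncard_empty]
    · right
      have hhw := hplusw h hh
      have hne : h ≠ h + w := fun h0 => hw0 (left_eq_add.mp h0)
      have hSeq : holes a ∩ ↑B = {h, h + w} := by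
        ext x
        constructor
        · intro hx
          by_cases hxh : x = h
          · exact Or.inl hxh
          · exact Or.inr (key h x hh hx (fun he => hxh he.symm))
        · rintro (rfl | rfl)
          · exact hh
          · exact hhw
      rw [hSeq, Set.ncard_pair hne]
  · intro h₁ h₂ hh₁ hh₂ hne v
    have h2eq : h₂ = h₁ + w := key h₁ h₂ hh₁ hh₂ hne
    have hsum : h₁ + h₂ = w := by
      rw [h2eq, ← add_assoc, addself h₁, zero_add]
    rw [hsum]
    constructor
    · rintro ⟨hv, hv0⟩; exact huniq v hv hv0
    · rintro rfl; exact ⟨hwmem, hw0⟩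
end

section
/- Let {a₁,…,a₉} be a maximal partial line spread of type X with common line a₉, reguli r₁, r₂, r₃, r₄, and special plane α₉, and let B be a codeword plane for the spread with nⱼ the number of lines ℓ ∈ rⱼ satisfying B ⊓ ℓ ≠ ⊥. If B ⊓ a₉ = ⊥, then (n₁,n₂,n₃,n₄) is a permutation of (2,2,2,0) or a permutation of (2,2,1,1). -/
open Module

/-- The number of nonzero-or-not vectors of a submodule of `Fin 5 → ZMod 2`. -/
lemma card_filter_mem_aux9 (W : Submodule (ZMod 2) (Fin 5 → ZMod 2)) [DecidablePred (· ∈ W)] :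
    (Finset.univ.filter (· ∈ W)).card = 2 ^ finrank (ZMod 2) W := by
  rw [← Fintype.card_subtype]
  have := card_eq_pow_finrank (K := ZMod 2) (V := W)
  simpa [ZMod.card] using this

/-- The number of nonzero vectors of a submodule of `Fin 5 → ZMod 2`. -/
lemma card_nonzero_aux9 (W : Submodule (ZMod 2) (Fin 5 → ZMod 2))
    [DecidablePred (· ∈ W)] [DecidablePred (fun v : Fin 5 → ZMod 2 => v ∈ W ∧ v ≠ 0)] :
    (Finset.univ.filter (fun v => v ∈ W ∧ v ≠ 0)).card = 2 ^ finrank (ZMod 2) W - 1 := by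
  have h0 : (0 : Fin 5 → ZMod 2) ∈ Finset.univ.filter (· ∈ W) := by simp [W.zero_mem]
  have he : Finset.univ.filter (fun v => v ∈ W ∧ v ≠ 0)
      = (Finset.univ.filter (· ∈ W)).erase 0 := by
    ext v; simp [Finset.mem_erase, and_comm]
  rw [he, Finset.card_erase_of_mem h0, card_filter_mem_aux9]

lemma ncard_triple_aux9 {α : Type*} (p : α → Prop) [DecidablePred p] {x y z : α}
    (hxy : x ≠ y) (hxz : x ≠ z) (hyz : y ≠ z) (hz : ¬ p z) :
    {ℓ ∈ ({x, y, z} : Set α) | p ℓ}.ncard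
      = (if p x then 1 else 0) + (if p y then 1 else 0) := by
  by_cases hx : p x <;> by_cases hy : p y
  · have : {ℓ ∈ ({x, y, z} : Set α) | p ℓ} = {x, y} := by
      ext ℓ
      simp only [Set.mem_setOf_eq, Set.mem_insert_iff, Set.mem_singleton_iff]
      constructor
      · rintro ⟨(rfl | rfl | rfl), hp⟩ <;> tauto
      · rintro (rfl | rfl) <;> tauto
    rw [this, Set.ncard_pair hxy]; simp [hx, hy]
  · have : {ℓ ∈ ({x, y, z} : Set α) | p ℓ} = {x} := by
      ext ℓ
      simp only [Set.mem_setOf_eq, Set.mem_insert_iff, Set.mem_singleton_iff]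
      constructor
      · rintro ⟨(rfl | rfl | rfl), hp⟩ <;> tauto
      · rintro rfl; tauto
    rw [this, Set.ncard_singleton]; simp [hx, hy]
  · have : {ℓ ∈ ({x, y, z} : Set α) | p ℓ} = {y} := by
      ext ℓ
      simp only [Set.mem_setOf_eq, Set.mem_insert_iff, Set.mem_singleton_iff]
      constructor
      · rintro ⟨(rfl | rfl | rfl), hp⟩ <;> tauto
      · rintro rfl; tauto
    rw [this, Set.ncard_singleton]; simp [hx, hy]
  · have : {ℓ ∈ ({x, y, z} : Set α) | p ℓ} = ∅ := by
      ext ℓ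
      simp only [Set.mem_setOf_eq, Set.mem_insert_iff, Set.mem_singleton_iff]
      simp only [Set.mem_empty_iff_false, iff_false, not_and]
      rintro (rfl | rfl | rfl) <;> tauto
    rw [this, Set.ncard_empty]; simp [hx, hy]

/-- For a type X maximal partial line spread {a₁,…,a₉} (common line
a₉ = `a 8`, reguli r₁ = {a₁,a₂,a₉}, r₂ = {a₃,a₄,a₉}, r₃ = {a₅,a₆,a₉},
r₄ = {a₇,a₈,a₉}, special plane α₉) and a codeword plane B with nⱼ the number of lines
of rⱼ meeting B: if B is disjoint from a₉, then (n₁,n₂,n₃,n₄) is a permutation of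
(2,2,2,0) or a permutation of (2,2,1,1). -/
theorem stmt_9
    (a : Fin 9 → Submodule (ZMod 2) (Fin 5 → ZMod 2))
    (α₉ B : Submodule (ZMod 2) (Fin 5 → ZMod 2))
    (haLines : ∀ i, finrank (ZMod 2) (a i) = 2)
    (hadisj : ∀ i j, i ≠ j → a i ⊓ a j = ⊥)
    (hr1 : finrank (ZMod 2) ↥(a 0 ⊔ a 1 ⊔ a 8) = 4)
    (hr2 : finrank (ZMod 2) ↥(a 2 ⊔ a 3 ⊔ a 8) = 4)
    (hr3 : finrank (ZMod 2) ↥(a 4 ⊔ a 5 ⊔ a 8) = 4)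
    (hr4 : finrank (ZMod 2) ↥(a 6 ⊔ a 7 ⊔ a 8) = 4)
    (hα : finrank (ZMod 2) α₉ = 3)
    (ha8α : a 8 ≤ α₉)
    (hspec : ∀ v : Fin 5 → ZMod 2, v ≠ 0 → (v ∈ α₉ ↔ v ∈ a 8 ∨ v ∈ holes a))
    (hB : finrank (ZMod 2) B = 3)
    (hBcode : ∀ i, finrank (ZMod 2) ↥(B ⊓ a i) ≤ 1)
    (n₁ n₂ n₃ n₄ : ℕ)
    (hn₁ : n₁ = {ℓ ∈ ({a 0, a 1, a 8} : Set (Submodule (ZMod 2) (Fin 5 → ZMod 2))) |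
      B ⊓ ℓ ≠ ⊥}.ncard)
    (hn₂ : n₂ = {ℓ ∈ ({a 2, a 3, a 8} : Set (Submodule (ZMod 2) (Fin 5 → ZMod 2))) |
      B ⊓ ℓ ≠ ⊥}.ncard)
    (hn₃ : n₃ = {ℓ ∈ ({a 4, a 5, a 8} : Set (Submodule (ZMod 2) (Fin 5 → ZMod 2))) |
      B ⊓ ℓ ≠ ⊥}.ncard)
    (hn₄ : n₄ = {ℓ ∈ ({a 6, a 7, a 8} : Set (Submodule (ZMod 2) (Fin 5 → ZMod 2))) |
      B ⊓ ℓ ≠ ⊥}.ncard)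
    (hB9 : B ⊓ a 8 = ⊥) :
    ({n₁, n₂, n₃, n₄} : Multiset ℕ) = {2, 2, 2, 0} ∨
      ({n₁, n₂, n₃, n₄} : Multiset ℕ) = {2, 2, 1, 1} := by
  classical
  clear hr1 hr2 hr3 hr4
  have hV : finrank (ZMod 2) (Fin 5 → ZMod 2) = 5 := by
    simp [Module.finrank_fintype_fun_eq_card]
  -- the lines are pairwise distinct
  have haneq : ∀ i j : Fin 9, i ≠ j → a i ≠ a j := by
    intro i j hij heq
    have h1 := hadisj i j hij
    rw [heq, inf_idem] at h1
    have h2 := haLines j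
    rw [h1, finrank_bot] at h2
    exact absurd h2 (by norm_num)
  -- the intersection of B with the special plane is a point
  have hW : finrank (ZMod 2) ↥(B ⊓ α₉) = 1 := by
    have h1 := Submodule.finrank_sup_add_finrank_inf_eq B α₉
    have h2 : finrank (ZMod 2) ↥(B ⊔ α₉) ≤ 5 := le_trans (Submodule.finrank_le _) (le_of_eq hV)
    have h3 : (B ⊓ α₉) ⊓ a 8 = ⊥ := by
      rw [← le_bot_iff, ← hB9]
      exact inf_le_inf_right _ inf_le_left
    have h4 : (B ⊓ α₉) ⊔ a 8 ≤ α₉ := sup_le inf_le_right ha8α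
    have h5 := Submodule.finrank_sup_add_finrank_inf_eq (B ⊓ α₉) (a 8)
    have h6 : finrank (ZMod 2) ↥((B ⊓ α₉) ⊔ a 8) ≤ 3 := hα ▸ Submodule.finrank_mono h4
    rw [h3, finrank_bot, haLines 8] at h5
    rw [hB, hα] at h1
    omega
  -- the number of nonzero vectors of B in each line
  have hme : ∀ i : Fin 9,
      (Finset.univ.filter (fun v => v ∈ B ∧ v ≠ 0 ∧ v ∈ a i)).card
        = if B ⊓ a i = ⊥ then 0 else 1 := by
    intro i
    have hfe : (Finset.univ.filter (fun v => v ∈ B ∧ v ≠ 0 ∧ v ∈ a i))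
        = (Finset.univ.filter (fun v => v ∈ B ⊓ a i ∧ v ≠ 0)) := by
      ext v; simp only [Finset.mem_filter, Submodule.mem_inf]; tauto
    rw [hfe, card_nonzero_aux9]
    by_cases hbi : B ⊓ a i = ⊥
    · rw [hbi]; simp [finrank_bot]
    · have hd : finrank (ZMod 2) ↥(B ⊓ a i) = 1 := by
        have h0 : finrank (ZMod 2) ↥(B ⊓ a i) ≠ 0 := by
          simpa [Submodule.finrank_eq_zero] using hbi
        have := hBcode i
        omega
      rw [hd]; simp [hbi]
  -- the count of nonzero vectors of B in the special plane
  have hcardH : (Finset.univ.filter (fun v : Fin 5 → ZMod 2 => v ∈ B ∧ v ≠ 0 ∧ v ∈ α₉)).card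
      = 1 := by
    have hfe : (Finset.univ.filter (fun v : Fin 5 → ZMod 2 => v ∈ B ∧ v ≠ 0 ∧ v ∈ α₉))
        = (Finset.univ.filter (fun v => v ∈ B ⊓ α₉ ∧ v ≠ 0)) := by
      ext v; simp only [Finset.mem_filter, Submodule.mem_inf]; tauto
    rw [hfe, card_nonzero_aux9, hW]
    norm_num
  have hcard7 : (Finset.univ.filter (fun v : Fin 5 → ZMod 2 => v ∈ B ∧ v ≠ 0)).card = 7 := by
    rw [card_nonzero_aux9 B, hB]
    norm_num
  -- the partition of the nonzero vectors of B
  have hcover : (Finset.univ.filter (fun v : Fin 5 → ZMod 2 => v ∈ B ∧ v ≠ 0))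
      = (Finset.univ.filter (fun v : Fin 5 → ZMod 2 => v ∈ B ∧ v ≠ 0 ∧ v ∈ α₉))
        ∪ Finset.univ.biUnion
          (fun i : Fin 9 => Finset.univ.filter (fun v => v ∈ B ∧ v ≠ 0 ∧ v ∈ a i)) := by
    ext v
    simp only [Finset.mem_filter, Finset.mem_union, Finset.mem_biUnion, Finset.mem_univ, true_and]
    constructor
    · rintro ⟨hvB, hv0⟩
      by_cases hvα : v ∈ α₉
      · exact Or.inl ⟨hvB, hv0, hvα⟩
      · have hnh : v ∉ holes a := fun hh => hvα ((hspec v hv0).2 (Or.inr hh))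
        simp only [holes, Set.mem_setOf_eq, not_and, not_forall, not_not] at hnh
        obtain ⟨i, hi⟩ := hnh hv0
        exact Or.inr ⟨i, hvB, hv0, hi⟩
    · rintro (⟨h1, h2, _⟩ | ⟨i, h1, h2, _⟩) <;> exact ⟨h1, h2⟩
  have hdisj1 : Disjoint
      (Finset.univ.filter (fun v : Fin 5 → ZMod 2 => v ∈ B ∧ v ≠ 0 ∧ v ∈ α₉))
      (Finset.univ.biUnion
        (fun i : Fin 9 => Finset.univ.filter (fun v => v ∈ B ∧ v ≠ 0 ∧ v ∈ a i))) := by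
    rw [Finset.disjoint_left]
    intro v hv1 hv2
    simp only [Finset.mem_filter, Finset.mem_biUnion, Finset.mem_univ, true_and] at hv1 hv2
    obtain ⟨hvB, hv0, hvα⟩ := hv1
    obtain ⟨i, -, -, hvi⟩ := hv2
    rcases (hspec v hv0).1 hvα with h8 | hh
    · by_cases hi8 : i = (8 : Fin 9)
      · subst hi8
        have : v ∈ B ⊓ a 8 := Submodule.mem_inf.mpr ⟨hvB, hvi⟩
        rw [hB9, Submodule.mem_bot] at this
        exact hv0 this
      · have : v ∈ a i ⊓ a 8 := Submodule.mem_inf.mpr ⟨hvi, h8⟩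
        rw [hadisj i 8 hi8, Submodule.mem_bot] at this
        exact hv0 this
    · exact hh.2 i hvi
  have hdisj2 : ∀ i ∈ (Finset.univ : Finset (Fin 9)), ∀ j ∈ (Finset.univ : Finset (Fin 9)),
      i ≠ j → Disjoint (Finset.univ.filter (fun v => v ∈ B ∧ v ≠ 0 ∧ v ∈ a i))
        (Finset.univ.filter (fun v => v ∈ B ∧ v ≠ 0 ∧ v ∈ a j)) := by
    intro i _ j _ hij
    rw [Finset.disjoint_left]
    intro v hv1 hv2
    simp only [Finset.mem_filter, Finset.mem_univ, true_and] at hv1 hv2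
    have : v ∈ a i ⊓ a j := Submodule.mem_inf.mpr ⟨hv1.2.2, hv2.2.2⟩
    rw [hadisj i j hij, Submodule.mem_bot] at this
    exact hv1.2.1 this
  -- the sum of the line counts is 6
  have hsum9 : ∑ i : Fin 9, (if B ⊓ a i = ⊥ then (0:ℕ) else 1) = 6 := by
    have h := hcard7
    rw [hcover, Finset.card_union_of_disjoint hdisj1, Finset.card_biUnion hdisj2, hcardH] at h
    have h2 : ∑ i : Fin 9, (Finset.univ.filter (fun v => v ∈ B ∧ v ≠ 0 ∧ v ∈ a i)).card
        = ∑ i : Fin 9, (if B ⊓ a i = ⊥ then (0:ℕ) else 1) :=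
      Finset.sum_congr rfl fun i _ => hme i
    omega
  rw [Fin.sum_univ_succ, Fin.sum_univ_eight] at hsum9
  norm_num [show ((0:Fin 8).succ : Fin 9) = 1 by decide, show ((1:Fin 8).succ : Fin 9) = 2 by decide,
    show ((2:Fin 8).succ : Fin 9) = 3 by decide, show ((3:Fin 8).succ : Fin 9) = 4 by decide,
    show ((4:Fin 8).succ : Fin 9) = 5 by decide, show ((5:Fin 8).succ : Fin 9) = 6 by decide,
    show ((6:Fin 8).succ : Fin 9) = 7 by decide, show ((7:Fin 8).succ : Fin 9) = 8 by decide,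
    hB9] at hsum9
  -- rewrite the nⱼ
  have hflip : ∀ i : Fin 9, (if B ⊓ a i ≠ ⊥ then (1:ℕ) else 0)
      = if B ⊓ a i = ⊥ then 0 else 1 := by
    intro i; by_cases h : B ⊓ a i = ⊥ <;> simp [h]
  have hz : ¬ (B ⊓ a 8 ≠ ⊥) := not_not.mpr hB9
  have hv1 : n₁ = (if B ⊓ a 0 = ⊥ then (0:ℕ) else 1) + (if B ⊓ a 1 = ⊥ then (0:ℕ) else 1) := by
    rw [hn₁, ncard_triple_aux9 (fun ℓ => B ⊓ ℓ ≠ ⊥) (haneq 0 1 (by decide))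
      (haneq 0 8 (by decide)) (haneq 1 8 (by decide)) hz, hflip 0, hflip 1]
  have hv2 : n₂ = (if B ⊓ a 2 = ⊥ then (0:ℕ) else 1) + (if B ⊓ a 3 = ⊥ then (0:ℕ) else 1) := by
    rw [hn₂, ncard_triple_aux9 (fun ℓ => B ⊓ ℓ ≠ ⊥) (haneq 2 3 (by decide))
      (haneq 2 8 (by decide)) (haneq 3 8 (by decide)) hz, hflip 2, hflip 3]
  have hv3 : n₃ = (if B ⊓ a 4 = ⊥ then (0:ℕ) else 1) + (if B ⊓ a 5 = ⊥ then (0:ℕ) else 1) := by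
    rw [hn₃, ncard_triple_aux9 (fun ℓ => B ⊓ ℓ ≠ ⊥) (haneq 4 5 (by decide))
      (haneq 4 8 (by decide)) (haneq 5 8 (by decide)) hz, hflip 4, hflip 5]
  have hv4 : n₄ = (if B ⊓ a 6 = ⊥ then (0:ℕ) else 1) + (if B ⊓ a 7 = ⊥ then (0:ℕ) else 1) := by
    rw [hn₄, ncard_triple_aux9 (fun ℓ => B ⊓ ℓ ≠ ⊥) (haneq 6 7 (by decide))
      (haneq 6 8 (by decide)) (haneq 7 8 (by decide)) hz, hflip 6, hflip 7]
  have hle : ∀ i : Fin 9, (if B ⊓ a i = ⊥ then (0:ℕ) else 1) ≤ 1 := by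
    intro i; split <;> omega
  have hle0 := hle 0; have hle1 := hle 1; have hle2 := hle 2; have hle3 := hle 3
  have hle4 := hle 4; have hle5 := hle 5; have hle6 := hle 6; have hle7 := hle 7
  generalize (if B ⊓ a 0 = ⊥ then (0:ℕ) else 1) = s0 at hv1 hsum9 hle0
  generalize (if B ⊓ a 1 = ⊥ then (0:ℕ) else 1) = s1 at hv1 hsum9 hle1
  generalize (if B ⊓ a 2 = ⊥ then (0:ℕ) else 1) = s2 at hv2 hsum9 hle2
  generalize (if B ⊓ a 3 = ⊥ then (0:ℕ) else 1) = s3 at hv2 hsum9 hle3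
  generalize (if B ⊓ a 4 = ⊥ then (0:ℕ) else 1) = s4 at hv3 hsum9 hle4
  generalize (if B ⊓ a 5 = ⊥ then (0:ℕ) else 1) = s5 at hv3 hsum9 hle5
  generalize (if B ⊓ a 6 = ⊥ then (0:ℕ) else 1) = s6 at hv4 hsum9 hle6
  generalize (if B ⊓ a 7 = ⊥ then (0:ℕ) else 1) = s7 at hv4 hsum9 hle7
  have hb1 : n₁ ≤ 2 := by omega
  have hb2 : n₂ ≤ 2 := by omega
  have hb3 : n₃ ≤ 2 := by omega
  have hb4 : n₄ ≤ 2 := by omega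
  have hsumn : n₁ + n₂ + n₃ + n₄ = 6 := by omega
  clear hv1 hv2 hv3 hv4 hsum9 hn₁ hn₂ hn₃ hn₄
  interval_cases n₁ <;> interval_cases n₂ <;> interval_cases n₃ <;> interval_cases n₄ <;>
    first
      | (left; decide)
      | (right; decide)
      | (exfalso; omega)
end

section
/- Let {a₁,…,a₉} be a maximal partial line spread of type X with common line a₉, reguli r₁, r₂, r₃, r₄, and special plane α₉, and let B be a codeword plane for the spread with nⱼ the number of lines ℓ ∈ rⱼ satisfying B ⊓ ℓ ≠ ⊥. If B ⊓ a₉ ≠ ⊥ and no hole of the spread lies in B, then (n₁,n₂,n₃,n₄) is a permutation of (3,3,2,2) or a permutation of (3,3,3,1). -/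
open Module

open Classical in
lemma aux_card' (W : Submodule (ZMod 2) (Fin 5 → ZMod 2)) :
    (Finset.univ.filter (fun v => v ∈ W ∧ v ≠ 0)).card = 2 ^ finrank (ZMod 2) W - 1 := by
  have h1 : (Finset.univ.filter (fun v => v ∈ W ∧ v ≠ 0))
      = (Finset.univ.filter (· ∈ W)).erase 0 := by
    ext v; simp [Finset.mem_erase, and_comm]
  have h2 : Fintype.card ↥W = 2 ^ finrank (ZMod 2) W := by
    rw [card_eq_pow_finrank (K := ZMod 2) (V := ↥W), ZMod.card]
  rw [h1, Finset.card_erase_of_mem (by simp [W.zero_mem]), ← Fintype.card_subtype]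
  rw [show Fintype.card {v : Fin 5 → ZMod 2 // v ∈ W} = Fintype.card ↥W from
    Fintype.card_congr (Equiv.refl _), h2]

open Classical in
lemma ncard_sep_triple {α : Type*} (x y z : α) (P : α → Prop)
    (hxy : x ≠ y) (hxz : x ≠ z) (hyz : y ≠ z) :
    {ℓ ∈ ({x, y, z} : Set α) | P ℓ}.ncard =
      (if P x then 1 else 0) + (if P y then 1 else 0) + (if P z then 1 else 0) := by
  have h : {ℓ ∈ ({x, y, z} : Set α) | P ℓ} = ↑(({x, y, z} : Finset α).filter P) := by
    ext ℓ
    simp only [Set.mem_setOf_eq, Set.mem_insert_iff, Set.mem_singleton_iff, Finset.coe_filter,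
      Finset.mem_insert, Finset.mem_singleton]
  rw [h, Set.ncard_coe_finset, Finset.card_filter]
  rw [Finset.sum_insert (by simp [hxy, hxz]), Finset.sum_insert (by simp [hyz]),
    Finset.sum_singleton]
  ring

/-- For a type X maximal partial line spread {a₁,…,a₉} (common line
a₉ = `a 8`, reguli r₁ = {a₁,a₂,a₉}, r₂ = {a₃,a₄,a₉}, r₃ = {a₅,a₆,a₉},
r₄ = {a₇,a₈,a₉}, special plane α₉) and a codeword plane B with nⱼ the number of lines
of rⱼ meeting B: if B meets a₉ and no hole of the spread lies in B, then (n₁,n₂,n₃,n₄)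
is a permutation of (3,3,2,2) or a permutation of (3,3,3,1). -/
theorem stmt_10
    (a : Fin 9 → Submodule (ZMod 2) (Fin 5 → ZMod 2))
    (α₉ B : Submodule (ZMod 2) (Fin 5 → ZMod 2))
    (haLines : ∀ i, finrank (ZMod 2) (a i) = 2)
    (hadisj : ∀ i j, i ≠ j → a i ⊓ a j = ⊥)
    (hr1 : finrank (ZMod 2) ↥(a 0 ⊔ a 1 ⊔ a 8) = 4)
    (hr2 : finrank (ZMod 2) ↥(a 2 ⊔ a 3 ⊔ a 8) = 4)
    (hr3 : finrank (ZMod 2) ↥(a 4 ⊔ a 5 ⊔ a 8) = 4)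
    (hr4 : finrank (ZMod 2) ↥(a 6 ⊔ a 7 ⊔ a 8) = 4)
    (hα : finrank (ZMod 2) α₉ = 3)
    (ha8α : a 8 ≤ α₉)
    (hspec : ∀ v : Fin 5 → ZMod 2, v ≠ 0 → (v ∈ α₉ ↔ v ∈ a 8 ∨ v ∈ holes a))
    (hB : finrank (ZMod 2) B = 3)
    (hBcode : ∀ i, finrank (ZMod 2) ↥(B ⊓ a i) ≤ 1)
    (n₁ n₂ n₃ n₄ : ℕ)
    (hn₁ : n₁ = {ℓ ∈ ({a 0, a 1, a 8} : Set (Submodule (ZMod 2) (Fin 5 → ZMod 2))) |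
      B ⊓ ℓ ≠ ⊥}.ncard)
    (hn₂ : n₂ = {ℓ ∈ ({a 2, a 3, a 8} : Set (Submodule (ZMod 2) (Fin 5 → ZMod 2))) |
      B ⊓ ℓ ≠ ⊥}.ncard)
    (hn₃ : n₃ = {ℓ ∈ ({a 4, a 5, a 8} : Set (Submodule (ZMod 2) (Fin 5 → ZMod 2))) |
      B ⊓ ℓ ≠ ⊥}.ncard)
    (hn₄ : n₄ = {ℓ ∈ ({a 6, a 7, a 8} : Set (Submodule (ZMod 2) (Fin 5 → ZMod 2))) |
      B ⊓ ℓ ≠ ⊥}.ncard)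
    (hB9 : B ⊓ a 8 ≠ ⊥)
    (hh : holes a ∩ ↑B = ∅) :
    ({n₁, n₂, n₃, n₄} : Multiset ℕ) = {3, 3, 2, 2} ∨
      ({n₁, n₂, n₃, n₄} : Multiset ℕ) = {3, 3, 3, 1} := by
  classical
  -- distinctness of the lines
  have hd : ∀ i j : Fin 9, i ≠ j → a i ≠ a j := by
    intro i j hij he
    have h1 := hadisj i j hij
    rw [he, inf_idem] at h1
    have h2 := haLines j
    rw [h1] at h2
    simp [finrank_bot] at h2
  -- the point-count of B ⊓ a i
  set T : Fin 9 → Finset (Fin 5 → ZMod 2) :=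
    fun i => Finset.univ.filter (fun v => v ∈ B ⊓ a i ∧ v ≠ 0) with hT
  have hne : ∀ i, (T i).card = if B ⊓ a i ≠ ⊥ then 1 else 0 := by
    intro i
    have hc : (T i).card = 2 ^ finrank (ZMod 2) ↥(B ⊓ a i) - 1 := aux_card' _
    by_cases h : B ⊓ a i = ⊥
    · rw [hc, h, if_neg (by simp)]; simp [finrank_bot]
    · have h0 : finrank (ZMod 2) ↥(B ⊓ a i) ≠ 0 :=
        fun h0 => h (Submodule.finrank_eq_zero.mp h0)
      have h1 : finrank (ZMod 2) ↥(B ⊓ a i) = 1 := by have := hBcode i; omega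
      rw [hc, h1, if_pos h]; norm_num
  have hdisj : ∀ i ∈ (Finset.univ : Finset (Fin 9)), ∀ j ∈ Finset.univ, i ≠ j →
      Disjoint (T i) (T j) := by
    intro i _ j _ hij
    rw [Finset.disjoint_left]
    intro v hvi hvj
    simp only [hT, Finset.mem_filter, Finset.mem_univ, true_and, Submodule.mem_inf] at hvi hvj
    have hv : v ∈ a i ⊓ a j := ⟨hvi.1.2, hvj.1.2⟩
    rw [hadisj i j hij] at hv
    exact hvi.2 hv
  have hbU : (Finset.univ : Finset (Fin 9)).biUnion T
      = Finset.univ.filter (fun v => v ∈ B ∧ v ≠ 0) := by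
    ext v
    simp only [hT, Finset.mem_biUnion, Finset.mem_filter, Finset.mem_univ, true_and,
      Submodule.mem_inf]
    constructor
    · rintro ⟨i, ⟨hvB, _⟩, hv0⟩; exact ⟨hvB, hv0⟩
    · rintro ⟨hvB, hv0⟩
      have hnh : v ∉ holes a := fun hv => Set.eq_empty_iff_forall_notMem.mp hh v ⟨hv, hvB⟩
      simp only [holes, Set.mem_setOf_eq, not_and, not_forall, not_not] at hnh
      obtain ⟨i, hi⟩ := hnh hv0
      exact ⟨i, ⟨⟨hvB, hi⟩, hv0⟩⟩
  have hsum : ∑ i : Fin 9, (T i).card = 7 := by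
    rw [← Finset.card_biUnion hdisj, hbU, aux_card' B, hB]; norm_num
  simp only [hne] at hsum
  rw [show (Finset.univ : Finset (Fin 9)) = {0,1,2,3,4,5,6,7,8} from by decide,
    Finset.sum_insert (by decide), Finset.sum_insert (by decide), Finset.sum_insert (by decide),
    Finset.sum_insert (by decide), Finset.sum_insert (by decide), Finset.sum_insert (by decide),
    Finset.sum_insert (by decide), Finset.sum_insert (by decide), Finset.sum_singleton] at hsum
  -- express the nⱼ
  have e1 : n₁ = (if B ⊓ a 0 ≠ ⊥ then 1 else 0) + (if B ⊓ a 1 ≠ ⊥ then 1 else 0)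
      + (if B ⊓ a 8 ≠ ⊥ then 1 else 0) := by
    rw [hn₁, ncard_sep_triple _ _ _ _ (hd 0 1 (by decide)) (hd 0 8 (by decide))
      (hd 1 8 (by decide))]; congr!
  have e2 : n₂ = (if B ⊓ a 2 ≠ ⊥ then 1 else 0) + (if B ⊓ a 3 ≠ ⊥ then 1 else 0)
      + (if B ⊓ a 8 ≠ ⊥ then 1 else 0) := by
    rw [hn₂, ncard_sep_triple _ _ _ _ (hd 2 3 (by decide)) (hd 2 8 (by decide))
      (hd 3 8 (by decide))]; congr!
  have e3 : n₃ = (if B ⊓ a 4 ≠ ⊥ then 1 else 0) + (if B ⊓ a 5 ≠ ⊥ then 1 else 0)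
      + (if B ⊓ a 8 ≠ ⊥ then 1 else 0) := by
    rw [hn₃, ncard_sep_triple _ _ _ _ (hd 4 5 (by decide)) (hd 4 8 (by decide))
      (hd 5 8 (by decide))]; congr!
  have e4 : n₄ = (if B ⊓ a 6 ≠ ⊥ then 1 else 0) + (if B ⊓ a 7 ≠ ⊥ then 1 else 0)
      + (if B ⊓ a 8 ≠ ⊥ then 1 else 0) := by
    rw [hn₄, ncard_sep_triple _ _ _ _ (hd 6 7 (by decide)) (hd 6 8 (by decide))
      (hd 7 8 (by decide))]; congr!
  have h8 : (if B ⊓ a 8 ≠ ⊥ then (1 : ℕ) else 0) = 1 := if_pos hB9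
  have hle : ∀ i : Fin 9, (if B ⊓ a i ≠ ⊥ then (1 : ℕ) else 0) ≤ 1 := by
    intro i; split <;> omega
  rw [h8] at e1 e2 e3 e4 hsum
  have b0 := hle 0; have b1 := hle 1; have b2 := hle 2; have b3 := hle 3
  have b4 := hle 4; have b5 := hle 5; have b6 := hle 6; have b7 := hle 7
  have hs : n₁ + n₂ + n₃ + n₄ = 10 := by omega
  have l1 : 1 ≤ n₁ ∧ n₁ ≤ 3 := by omega
  have l2 : 1 ≤ n₂ ∧ n₂ ≤ 3 := by omega
  have l3 : 1 ≤ n₃ ∧ n₃ ≤ 3 := by omega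
  have l4 : 1 ≤ n₄ ∧ n₄ ≤ 3 := by omega
  clear_value T
  clear e1 e2 e3 e4 hsum hn₁ hn₂ hn₃ hn₄ b0 b1 b2 b3 b4 b5 b6 b7 h8 hle hne
  obtain ⟨l1a, l1b⟩ := l1; obtain ⟨l2a, l2b⟩ := l2
  obtain ⟨l3a, l3b⟩ := l3; obtain ⟨l4a, l4b⟩ := l4
  interval_cases n₁ <;> interval_cases n₂ <;> interval_cases n₃ <;> interval_cases n₄ <;>
    first
      | omega
      | (left; decide)
      | (right; decide)
end

section
/- Let π₇, π₈, π₉ be 3-dimensional subspaces of V that pairwise intersect in the same 1-dimensional subspace (i.e., π₇ ⊓ π₈ = π₇ ⊓ π₉ = π₈ ⊓ π₉ and this common intersection is 1-dimensional). For i ∈ {7,8,9} let λᵢ be the dual annihilator of πᵢ in the dual space V* = Module.Dual 𝔽₂ V. Then each λᵢ is 2-dimensional, the λᵢ pairwise intersect in the zero subspace, and λ₉ ≤ λ₇ ⊔ λ₈; consequently the join λ₇ ⊔ λ₈ ⊔ λ₉ is 4-dimensional, so {λ₇, λ₈, λ₉} is a regulus in the dual space. -/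
/-!
Annihilation reverses inclusions and turns meets into joins and joins into meets. In a
5-space two planes meeting in a point span everything, so their annihilators (lines of the
dual) are disjoint; and since π₇ ⊓ π₈ ≤ π₉, the annihilator of π₉ lies in the annihilator of
the point π₇ ⊓ π₈, which is the 4-dimensional join of the annihilators of π₇ and π₈.
-/

open Module

theorem Submodule.dualAnnihilator_inf_eq_bot_of_sup_eq_top {R M : Type*} [CommSemiring R]
    [AddCommMonoid M] [Module R M] {U W : Submodule R M} (h : U ⊔ W = ⊤) :
    U.dualAnnihilator ⊓ W.dualAnnihilator = ⊥ := by
  rw [← dualAnnihilator_sup_eq, h, dualAnnihilator_top]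

theorem Submodule.sup_eq_top_of_finrank_add_eq {K V : Type*} [DivisionRing K] [AddCommGroup V]
    [Module K V] [FiniteDimensional K V] {U W : Submodule K V}
    (h : finrank K U + finrank K W = finrank K V + finrank K ↥(U ⊓ W)) : U ⊔ W = ⊤ := by
  apply eq_top_of_finrank_eq
  have := finrank_sup_add_finrank_inf_eq U W
  omega

namespace Subspace

variable {K V : Type*} [Field K] [AddCommGroup V] [Module K V]

theorem dualAnnihilator_le_sup_of_inf_le {U W X : Subspace K V} (h : U ⊓ W ≤ X) :
    X.dualAnnihilator ≤ U.dualAnnihilator ⊔ W.dualAnnihilator :=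
  dualAnnihilator_inf_eq U W ▸ Submodule.dualAnnihilator_anti h

theorem finrank_dualAnnihilator_eq_sub [FiniteDimensional K V] (W : Subspace K V) :
    finrank K W.dualAnnihilator = finrank K V - finrank K W := by
  have := finrank_add_finrank_dualAnnihilator_eq W
  omega

end Subspace

/-- If three planes π₇, π₈, π₉ of `Fin 5 → ZMod 2` pairwise intersect in
the same 1-dimensional subspace, then their dual annihilators λ₇, λ₈, λ₉ in the dual
space are 2-dimensional, pairwise disjoint, λ₉ ≤ λ₇ ⊔ λ₈, and the join λ₇ ⊔ λ₈ ⊔ λ₉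
is 4-dimensional; i.e. {λ₇, λ₈, λ₉} is a regulus in the dual space. -/
theorem stmt_11
    (π₇ π₈ π₉ : Submodule (ZMod 2) (Fin 5 → ZMod 2))
    (h7 : finrank (ZMod 2) π₇ = 3)
    (h8 : finrank (ZMod 2) π₈ = 3)
    (h9 : finrank (ZMod 2) π₉ = 3)
    (hi1 : π₇ ⊓ π₈ = π₇ ⊓ π₉)
    (hi2 : π₇ ⊓ π₈ = π₈ ⊓ π₉)
    (hidim : finrank (ZMod 2) ↥(π₇ ⊓ π₈) = 1) :
    finrank (ZMod 2) π₇.dualAnnihilator = 2 ∧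
    finrank (ZMod 2) π₈.dualAnnihilator = 2 ∧
    finrank (ZMod 2) π₉.dualAnnihilator = 2 ∧
    π₇.dualAnnihilator ⊓ π₈.dualAnnihilator = ⊥ ∧
    π₇.dualAnnihilator ⊓ π₉.dualAnnihilator = ⊥ ∧
    π₈.dualAnnihilator ⊓ π₉.dualAnnihilator = ⊥ ∧
    π₉.dualAnnihilator ≤ π₇.dualAnnihilator ⊔ π₈.dualAnnihilator ∧
    finrank (ZMod 2) ↥(π₇.dualAnnihilator ⊔ π₈.dualAnnihilator ⊔ π₉.dualAnnihilator) = 4 := by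
  have hV : finrank (ZMod 2) (Fin 5 → ZMod 2) = 5 := by simp
  have annihilators_disjoint {A B : Submodule (ZMod 2) (Fin 5 → ZMod 2)}
      (hA : finrank (ZMod 2) A = 3) (hB : finrank (ZMod 2) B = 3)
      (hAB : finrank (ZMod 2) ↥(A ⊓ B) = 1) :
      A.dualAnnihilator ⊓ B.dualAnnihilator = ⊥ :=
    Submodule.dualAnnihilator_inf_eq_bot_of_sup_eq_top
      (Submodule.sup_eq_top_of_finrank_add_eq (by omega))
  have h9_le : π₉.dualAnnihilator ≤ π₇.dualAnnihilator ⊔ π₈.dualAnnihilator :=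
    Subspace.dualAnnihilator_le_sup_of_inf_le (hi1 ▸ inf_le_right)
  refine ⟨?_, ?_, ?_, annihilators_disjoint h7 h8 hidim,
    annihilators_disjoint h7 h9 (hi1 ▸ hidim), annihilators_disjoint h8 h9 (hi2 ▸ hidim),
    h9_le, ?_⟩
  · rw [Subspace.finrank_dualAnnihilator_eq_sub, hV, h7]
  · rw [Subspace.finrank_dualAnnihilator_eq_sub, hV, h8]
  · rw [Subspace.finrank_dualAnnihilator_eq_sub, hV, h9]
  · rw [sup_eq_left.mpr h9_le, ← Subspace.dualAnnihilator_inf_eq,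
      Subspace.finrank_dualAnnihilator_eq_sub, hV, hidim]
end

section
/- Let β be the standard dot-product bilinear form on V (β(x,y) = Σᵢ xᵢyᵢ), which is nondegenerate, and for a subspace W ≤ V write W^⊥ for its orthogonal complement with respect to β. Let S1 = {a₁,…,a₉} and S2 = {b₁,…,b₉} each be nine 2-dimensional subspaces of V pairwise intersecting in the zero subspace (two maximal partial line spreads), and set Bⱼ = bⱼ^⊥ (a 3-dimensional subspace) for each j. Assume that no line aᵢ is contained in any plane Bⱼ. Then the 18 subspaces a₁,…,a₉, B₁,…,B₉ are pairwise distinct and any two of them are at subspace distance at least 3: the lines are pairwise at distance 4, the planes are pairwise at distance 4, and each line–plane pair is at distance at least 3. (This is the doubling construction S1 ∪ (S2)^⊥ of a (5,3)₂ subspace code of size 18.) -/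
open Module

/-!
Orthogonal complement with respect to the nondegenerate dot product is an inclusion-reversing
involution on subspaces that sends dimension `k` to `5 - k` and sums to intersections. Hence
two distinct dual planes meet in `(bᵢ ⊕ bⱼ)^⊥`, a point, and they are distinct because the `bⱼ`
are. A line not contained in a plane meets it in at most a point, which gives distance `≥ 3`.
-/

namespace Submodule

variable {K V : Type*} [DivisionRing K] [AddCommGroup V] [Module K V]

lemma finrank_sup_of_inf_eq_bot [FiniteDimensional K V] {U W : Submodule K V} (h : U ⊓ W = ⊥) :
    finrank K ↥(U ⊔ W) = finrank K U + finrank K W := by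
  have := finrank_sup_add_finrank_inf_eq U W
  rw [h, finrank_bot] at this
  omega

lemma ne_of_inf_eq_bot {U W : Submodule K V} (h : U ⊓ W = ⊥) (hU : finrank K U ≠ 0) : U ≠ W := by
  rintro rfl
  rw [inf_idem] at h
  subst h
  simp at hU

lemma finrank_inf_lt_of_not_le [FiniteDimensional K V] {U W : Submodule K V} (h : ¬U ≤ W) :
    finrank K ↥(U ⊓ W) < finrank K U :=
  finrank_lt_finrank_of_lt (inf_lt_left.mpr h)

end Submodule

namespace LinearMap.BilinForm

section

variable {R M : Type*} [CommSemiring R] [AddCommMonoid M] [Module R M]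

lemma orthogonal_sup (β : LinearMap.BilinForm R M) (U W : Submodule R M) :
    β.orthogonal (U ⊔ W) = β.orthogonal U ⊓ β.orthogonal W := by
  refine le_antisymm (le_inf (orthogonal_le le_sup_left) (orthogonal_le le_sup_right)) ?_
  rintro x ⟨hxU, hxW⟩ y hy
  obtain ⟨u, hu, w, hw, rfl⟩ := Submodule.mem_sup.mp hy
  change β (u + w) x = 0
  rw [map_add, LinearMap.add_apply, (hxU u hu : β u x = 0), (hxW w hw : β w x = 0), add_zero]

lemma isSymm_of_eq_dotProduct {ι : Type*} [Fintype ι] {β : LinearMap.BilinForm R (ι → R)}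
    (hβ : ∀ x y, β x y = x ⬝ᵥ y) : β.IsSymm :=
  ⟨fun x y => by simp [hβ, dotProduct_comm]⟩

end

lemma orthogonal_injective {K V : Type*} [Field K] [AddCommGroup V] [Module K V]
    [FiniteDimensional K V] {β : LinearMap.BilinForm K V} (hβ : β.Nondegenerate) (hβ₀ : β.IsRefl) :
    Function.Injective β.orthogonal :=
  Function.LeftInverse.injective (orthogonal_orthogonal hβ hβ₀)

lemma nondegenerate_of_eq_dotProduct {K ι : Type*} [Field K] [Fintype ι]
    {β : LinearMap.BilinForm K (ι → K)} (hβ : ∀ x y, β x y = x ⬝ᵥ y) : β.Nondegenerate :=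
  Nondegenerate.ofSeparatingLeft fun x hx =>
    dotProduct_eq_zero x fun y => (hβ x y).symm.trans (hx y)

end LinearMap.BilinForm

open LinearMap.BilinForm Submodule

/-- the doubling construction: Let β be the standard dot-product bilinear
form on `V = Fin 5 → ZMod 2` and `W^⊥` the β-orthogonal complement. Let S1 = {a₁,…,a₉}
and S2 = {b₁,…,b₉} be two maximal partial line spreads, and Bⱼ = bⱼ^⊥ the (3-dim) dual
planes. If no line aᵢ is contained in any plane Bⱼ, then the 18 subspaces a₁,…,a₉,
B₁,…,B₉ are pairwise distinct and pairwise at subspace distance at least 3: lines are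
pairwise at distance 4, planes are pairwise at distance 4, and each line–plane pair is
at distance at least 3. -/
theorem stmt_14
    (β : LinearMap.BilinForm (ZMod 2) (Fin 5 → ZMod 2))
    (hβ : ∀ x y : Fin 5 → ZMod 2, β x y = ∑ i, x i * y i)
    (a b : Fin 9 → Submodule (ZMod 2) (Fin 5 → ZMod 2))
    (haLines : ∀ i, finrank (ZMod 2) (a i) = 2)
    (hadisj : ∀ i j, i ≠ j → a i ⊓ a j = ⊥)
    (hbLines : ∀ j, finrank (ZMod 2) (b j) = 2)
    (hbdisj : ∀ i j, i ≠ j → b i ⊓ b j = ⊥)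
    (B : Fin 9 → Submodule (ZMod 2) (Fin 5 → ZMod 2))
    (hB : ∀ j, B j = β.orthogonal (b j))
    (hnotle : ∀ i j, ¬ a i ≤ B j) :
    (∀ j, finrank (ZMod 2) (B j) = 3) ∧
    (∀ i j, i ≠ j → a i ≠ a j) ∧
    (∀ i j, i ≠ j → B i ≠ B j) ∧
    (∀ i j, a i ≠ B j) ∧
    (∀ i j, i ≠ j →
      finrank (ZMod 2) (a i) + finrank (ZMod 2) (a j)
        - 2 * finrank (ZMod 2) ↥(a i ⊓ a j) = 4) ∧
    (∀ i j, i ≠ j →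
      finrank (ZMod 2) (B i) + finrank (ZMod 2) (B j)
        - 2 * finrank (ZMod 2) ↥(B i ⊓ B j) = 4) ∧
    (∀ i j, 3 ≤ finrank (ZMod 2) (a i) + finrank (ZMod 2) (B j)
        - 2 * finrank (ZMod 2) ↥(a i ⊓ B j)) := by
  have hnd : β.Nondegenerate := nondegenerate_of_eq_dotProduct hβ
  have hrefl : β.IsRefl := (isSymm_of_eq_dotProduct hβ).isRefl
  have hBdim : ∀ j, finrank (ZMod 2) (B j) = 3 := fun j => by
    rw [hB, finrank_orthogonal hnd, hbLines, finrank_fin_fun]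
  have hBinf : ∀ i j, i ≠ j → finrank (ZMod 2) ↥(B i ⊓ B j) = 1 := fun i j hij => by
    rw [hB, hB, ← orthogonal_sup, finrank_orthogonal hnd,
      finrank_sup_of_inf_eq_bot (hbdisj i j hij), hbLines, hbLines, finrank_fin_fun]
  have haBinf : ∀ i j, finrank (ZMod 2) ↥(a i ⊓ B j) < 2 := fun i j =>
    (finrank_inf_lt_of_not_le (hnotle i j)).trans_eq (haLines i)
  refine ⟨hBdim, ?_, ?_, ?_, ?_, ?_, ?_⟩
  · exact fun i j hij => ne_of_inf_eq_bot (hadisj i j hij) (by simp [haLines])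
  · intro i j hij hBij
    refine ne_of_inf_eq_bot (hbdisj i j hij) (by simp [hbLines]) (orthogonal_injective hnd hrefl ?_)
    rwa [← hB, ← hB]
  · intro i j hab
    have hdim := hBdim j
    rw [← hab, haLines] at hdim
    omega
  · intro i j hij
    rw [haLines, haLines, hadisj i j hij, finrank_bot]
  · intro i j hij
    rw [hBdim, hBdim, hBinf i j hij]
  · intro i j
    have := haBinf i j
    rw [haLines, hBdim]
    omega
end

section
/- Let {a₁,…,a₉} be a maximal partial line spread (nine 2-dimensional subspaces of V pairwise intersecting in ⊥) and suppose {a₁, a₂, a₉} is a regulus whose join σ = a₁ ⊔ a₂ ⊔ a₉ is 4-dimensional. Then no hole of the spread lies in σ; moreover, each of the remaining six lines aᵢ (i ∈ {3,4,5,6,7,8}) meets σ in exactly a 1-dimensional subspace, so the 15 nonzero vectors of σ are the nine nonzero vectors of a₁, a₂, a₉ together with exactly one nonzero vector from each of the other six lines. -/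
open Module Finset

set_option maxHeartbeats 1000000

/-- Let {a₁,…,a₉} be a maximal partial line spread of `Fin 5 → ZMod 2`
and suppose {a₁, a₂, a₉} is a regulus with 4-dimensional join σ = a₁ ⊔ a₂ ⊔ a₉. Then
no hole of the spread lies in σ; each of the remaining six lines meets σ in exactly a
1-dimensional subspace; and hence every nonzero vector of σ lies on some line of the
spread (the 15 nonzero vectors of σ are the nine nonzero vectors of a₁, a₂, a₉ together
with one vector from each of the other six lines). -/
theorem stmt_15
    (a : Fin 9 → Submodule (ZMod 2) (Fin 5 → ZMod 2))
    (haLines : ∀ i, finrank (ZMod 2) (a i) = 2)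
    (hadisj : ∀ i j, i ≠ j → a i ⊓ a j = ⊥)
    (σ : Submodule (ZMod 2) (Fin 5 → ZMod 2))
    (hσ : σ = a 0 ⊔ a 1 ⊔ a 8)
    (hreg : finrank (ZMod 2) σ = 4) :
    (∀ v : Fin 5 → ZMod 2, v ≠ 0 → (∀ i, v ∉ a i) → v ∉ σ) ∧
    (∀ i : Fin 9, i ≠ 0 → i ≠ 1 → i ≠ 8 → finrank (ZMod 2) ↥(a i ⊓ σ) = 1) ∧
    (∀ v : Fin 5 → ZMod 2, v ∈ σ → v ≠ 0 → ∃ i, v ∈ a i) := by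
  classical
  have h5 : finrank (ZMod 2) (Fin 5 → ZMod 2) = 5 := by
    simp [finrank_fintype_fun_eq_card]
  -- cardinality of a punctured submodule
  have hcard : ∀ p : Submodule (ZMod 2) (Fin 5 → ZMod 2),
      (((p : Set (Fin 5 → ZMod 2)) \ {0}).toFinite.toFinset).card
        = 2 ^ finrank (ZMod 2) ↥p - 1 := by
    intro p
    rw [← Set.ncard_eq_toFinset_card, Set.ncard_diff_singleton_of_mem p.zero_mem,
      ← Nat.card_coe_set_eq]
    have h : Nat.card ↥p = 2 ^ finrank (ZMod 2) ↥p := by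
      rw [Nat.card_eq_fintype_card]
      have := card_eq_pow_finrank (K := ZMod 2) (V := ↥p)
      simpa using this
    rw [← h]
    congr 1
  -- dimension bounds
  have hd1 : ∀ i, 1 ≤ finrank (ZMod 2) ↥(a i ⊓ σ) := by
    intro i
    have hsum := Submodule.finrank_sup_add_finrank_inf_eq (a i) σ
    have hle : finrank (ZMod 2) ↥(a i ⊔ σ) ≤ 5 := by
      have := Submodule.finrank_le (a i ⊔ σ)
      rw [h5] at this
      exact this
    rw [haLines, hreg] at hsum
    omega
  have hd2 : ∀ i, finrank (ZMod 2) ↥(a i ⊓ σ) ≤ 2 := by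
    intro i
    have h := Submodule.finrank_mono (inf_le_left : a i ⊓ σ ≤ a i)
    rw [haLines] at h
    exact h
  -- the finsets
  set F : Fin 9 → Finset (Fin 5 → ZMod 2) :=
    fun i => (((a i ⊓ σ : Submodule (ZMod 2) (Fin 5 → ZMod 2)) :
      Set (Fin 5 → ZMod 2)) \ {0}).toFinite.toFinset with hF
  have hFmem : ∀ i v, v ∈ F i ↔ v ≠ 0 ∧ v ∈ a i ∧ v ∈ σ := by
    intro i v
    rw [hF]
    simp only [Set.Finite.mem_toFinset, Set.mem_diff, Set.mem_singleton_iff,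
      SetLike.mem_coe, Submodule.mem_inf]
    tauto
  set T : Finset (Fin 5 → ZMod 2) :=
    (((σ : Set (Fin 5 → ZMod 2)) \ {0}).toFinite.toFinset) with hT
  have hTmem : ∀ v, v ∈ T ↔ v ≠ 0 ∧ v ∈ σ := by
    intro v
    rw [hT]
    simp only [Set.Finite.mem_toFinset, Set.mem_diff, Set.mem_singleton_iff,
      SetLike.mem_coe]
    tauto
  have hTcard : T.card = 15 := by rw [hT, hcard, hreg]; norm_num
  have hFcard : ∀ i, (F i).card = 2 ^ finrank (ZMod 2) ↥(a i ⊓ σ) - 1 := fun i =>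
    hcard _
  have hdisj : ∀ i ∈ Finset.univ (α := Fin 9), ∀ j ∈ Finset.univ, i ≠ j →
      Disjoint (F i) (F j) := by
    intro i _ j _ hij
    rw [Finset.disjoint_left]
    intro v hvi hvj
    rw [hFmem] at hvi hvj
    have hm : v ∈ a i ⊓ a j := ⟨hvi.2.1, hvj.2.1⟩
    rw [hadisj i j hij] at hm
    exact hvi.1 (by simpa using hm)
  have hBT : Finset.univ.biUnion F ⊆ T := by
    intro v hv
    rw [Finset.mem_biUnion] at hv
    obtain ⟨i, _, hv⟩ := hv
    rw [hFmem] at hv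
    exact (hTmem v).2 ⟨hv.1, hv.2.2⟩
  have hsumle : ∑ i, (F i).card ≤ 15 := by
    rw [← Finset.card_biUnion hdisj, ← hTcard]
    exact Finset.card_le_card hBT
  -- cards of F 0, F 1, F 8
  have hsub : ∀ i : Fin 9, a i ≤ σ → (F i).card = 3 := by
    intro i hi
    rw [hFcard, inf_eq_left.mpr hi, haLines]; norm_num
  have hc0 : (F 0).card = 3 := hsub 0 (by rw [hσ]; exact le_sup_of_le_left le_sup_left)
  have hc1 : (F 1).card = 3 := hsub 1 (by rw [hσ]; exact le_sup_of_le_left le_sup_right)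
  have hc8 : (F 8).card = 3 := hsub 8 (by rw [hσ]; exact le_sup_right)
  have hcge : ∀ i, 1 ≤ (F i).card := by
    intro i
    rw [hFcard]
    have h1 := hd1 i
    have h2 : 2 ^ 1 ≤ 2 ^ finrank (ZMod 2) ↥(a i ⊓ σ) :=
      Nat.pow_le_pow_right (by norm_num) h1
    omega
  have hsum9 : ∑ i, (F i).card = (F 0).card + (F 1).card + (F 2).card + (F 3).card
      + (F 4).card + (F 5).card + (F 6).card + (F 7).card + (F 8).card := by
    simp [Fin.sum_univ_succ]
    ring
  have hcmid : (F 2).card = 1 ∧ (F 3).card = 1 ∧ (F 4).card = 1 ∧ (F 5).card = 1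
      ∧ (F 6).card = 1 ∧ (F 7).card = 1 := by
    have h2 := hcge 2; have h3 := hcge 3; have h4 := hcge 4
    have h5' := hcge 5; have h6 := hcge 6; have h7 := hcge 7
    rw [hsum9] at hsumle
    omega
  have hsumeq : ∑ i, (F i).card = 15 := by
    rw [hsum9, hc0, hc1, hc8, hcmid.1, hcmid.2.1, hcmid.2.2.1, hcmid.2.2.2.1,
      hcmid.2.2.2.2.1, hcmid.2.2.2.2.2]
  have hBeqT : Finset.univ.biUnion F = T := by
    apply Finset.eq_of_subset_of_card_le hBT
    rw [Finset.card_biUnion hdisj, hsumeq, hTcard]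
  have hkey : ∀ v : Fin 5 → ZMod 2, v ∈ σ → v ≠ 0 → ∃ i, v ∈ a i := by
    intro v hv hv0
    have hvB : v ∈ Finset.univ.biUnion F := by
      rw [hBeqT, hTmem]; exact ⟨hv0, hv⟩
    rw [Finset.mem_biUnion] at hvB
    obtain ⟨i, _, hi⟩ := hvB
    exact ⟨i, ((hFmem i v).1 hi).2.1⟩
  refine ⟨fun v hv0 hvn hvσ => ?_, fun i hi0 hi1 hi8 => ?_, hkey⟩
  · obtain ⟨i, hi⟩ := hkey v hvσ hv0
    exact hvn i hi
  · have hci : (F i).card = 1 := by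
      fin_cases i
      · exact absurd rfl hi0
      · exact absurd rfl hi1
      · exact hcmid.1
      · exact hcmid.2.1
      · exact hcmid.2.2.1
      · exact hcmid.2.2.2.1
      · exact hcmid.2.2.2.2.1
      · exact hcmid.2.2.2.2.2
      · exact absurd rfl hi8
    rw [hFcard] at hci
    have h1 := hd1 i
    have h2 := hd2 i
    interval_cases h : finrank (ZMod 2) ↥(a i ⊓ σ)
    · rfl
    · simp at hci
end
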